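/- arXiv:2302.03766 — 8 statements merged into one kernel-verified Lean document; each statement's English description precedes it below -/
import Mathlib

section
/- Let S = {0,...,ℓ-1} × {0,...,h-1} be a rectangle and T ⊂ ℕ² a finite initial segment of height n, width m, and cardinality δ. Then S + T is the disjoint union of the four sets U₁ = {0,...,ℓ-2} × {0,...,h-2}, U₂ = (0,h-1) + {0,...,ℓ-2} × {0,...,n-1}, U₃ = (ℓ-1,0) + {0,...,m-1} × {0,...,h-2}, and U₄ = (ℓ-1,h-1) + T. Consequently |S + T| = (ℓ-1)(h-1) + (ℓ-1)n + m(h-1) + δ. -/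
/-!
With truncated subtraction on `ℕ × ℕ`, a point `z` lies in `[0, a] × [0, b] + T` for a lower set
`T` exactly when `z - (a, b) ∈ T`: write `z = min z (a, b) + (z - (a, b))`, and conversely
`s + p - (a, b) ≤ p` whenever `s ≤ (a, b)`. According to whether `z.1 < a` and `z.2 < b`, the
condition `z - (a, b) ∈ T` becomes `(0, 0) ∈ T`, `(0, z.2 - b) ∈ T`, `(z.1 - a, 0) ∈ T` or
`z ∈ (a, b) + T`, which are the four pieces; they sit in the four quadrants cut out at `(a, b)`.
-/

open Pointwise Finset

namespace RectangleAddLowerSet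

variable {T : Finset (ℕ × ℕ)}

theorem mem_rect_add_iff (hT : IsLowerSet (T : Set (ℕ × ℕ))) (a b : ℕ) (z : ℕ × ℕ) :
    z ∈ range (a + 1) ×ˢ range (b + 1) + T ↔ z - (a, b) ∈ T := by
  constructor
  · intro hz
    obtain ⟨s, hs, p, hp, rfl⟩ := mem_add.1 hz
    simp only [mem_product, mem_range] at hs
    refine hT (Prod.mk_le_mk.2 ⟨?_, ?_⟩) hp <;> simp <;> omega
  · intro hz
    refine mem_add.2 ⟨(min z.1 a, min z.2 b), ?_, z - (a, b), hz, ?_⟩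
    · simp only [mem_product, mem_range]; omega
    · ext <;> simp <;> omega

theorem mk_zero_mem_iff (hT : IsLowerSet (T : Set (ℕ × ℕ))) {m : ℕ}
    (hwidth : ∀ p ∈ T, p.1 < m) (hm : (m - 1, 0) ∈ T) (x : ℕ) : (x, 0) ∈ T ↔ x < m :=
  ⟨fun hx => hwidth _ hx, fun hx => hT (Prod.mk_le_mk.2 ⟨by omega, le_rfl⟩) hm⟩

theorem zero_mk_mem_iff (hT : IsLowerSet (T : Set (ℕ × ℕ))) {n : ℕ}
    (hheight : ∀ p ∈ T, p.2 < n) (hn : (0, n - 1) ∈ T) (y : ℕ) : (0, y) ∈ T ↔ y < n :=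
  ⟨fun hy => hheight _ hy, fun hy => hT (Prod.mk_le_mk.2 ⟨le_rfl, by omega⟩) hn⟩

theorem zero_mem_of_isLowerSet (hT : IsLowerSet (T : Set (ℕ × ℕ))) (hne : T.Nonempty) : (0, 0) ∈ T :=
  let ⟨_, hp⟩ := hne
  hT (Prod.mk_le_mk.2 ⟨Nat.zero_le _, Nat.zero_le _⟩) hp

theorem mem_image_add_iff (a b : ℕ) (z : ℕ × ℕ) :
    z ∈ T.image (· + (a, b)) ↔ a ≤ z.1 ∧ b ≤ z.2 ∧ z - (a, b) ∈ T := by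
  constructor
  · intro hz
    obtain ⟨p, hp, rfl⟩ := mem_image.1 hz
    simpa using hp
  · rintro ⟨ha, hb, hz⟩
    exact mem_image.2 ⟨_, hz, by ext <;> simp <;> omega⟩

variable {m n : ℕ}

theorem rect_add_eq_union (hT : IsLowerSet (T : Set (ℕ × ℕ))) (hne : T.Nonempty)
    (hwidth : ∀ x, (x, 0) ∈ T ↔ x < m) (hheight : ∀ y, (0, y) ∈ T ↔ y < n) (a b : ℕ) :
    range (a + 1) ×ˢ range (b + 1) + T =
      range a ×ˢ range b ∪ range a ×ˢ Ico b (b + n) ∪ Ico a (a + m) ×ˢ range b ∪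
        T.image (· + (a, b)) := by
  ext ⟨x, y⟩
  rw [mem_rect_add_iff hT]
  simp only [mem_union, mem_image_add_iff, mem_product, mem_range, mem_Ico, Prod.mk_sub_mk]
  rcases lt_or_ge x a with hx | hx <;> rcases lt_or_ge y b with hy | hy
  · simp [Nat.sub_eq_zero_of_le hx.le, Nat.sub_eq_zero_of_le hy.le, zero_mem_of_isLowerSet hT hne, hx, hy]
  · simp [Nat.sub_eq_zero_of_le hx.le, hheight]; omega
  · simp [Nat.sub_eq_zero_of_le hy.le, hwidth]; omega
  · simp [hx, hy, not_lt.2 hx, not_lt.2 hy]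

theorem disjoint_pieces (T : Finset (ℕ × ℕ)) (a b m n : ℕ) :
    Disjoint (range a ×ˢ range b) (range a ×ˢ Ico b (b + n)) ∧
    Disjoint (range a ×ˢ range b) (Ico a (a + m) ×ˢ range b) ∧
    Disjoint (range a ×ˢ range b) (T.image (· + (a, b))) ∧
    Disjoint (range a ×ˢ Ico b (b + n)) (Ico a (a + m) ×ˢ range b) ∧
    Disjoint (range a ×ˢ Ico b (b + n)) (T.image (· + (a, b))) ∧
    Disjoint (Ico a (a + m) ×ˢ range b) (T.image (· + (a, b))) := by
  refine ⟨?_, ?_, ?_, ?_, ?_, ?_⟩ <;>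
    simp only [disjoint_left, mem_product, mem_range, mem_Ico, mem_image_add_iff, Prod.forall] <;>
    omega

theorem card_rect_add (hT : IsLowerSet (T : Set (ℕ × ℕ))) (hne : T.Nonempty)
    (hwidth : ∀ x, (x, 0) ∈ T ↔ x < m) (hheight : ∀ y, (0, y) ∈ T ↔ y < n) (a b : ℕ) :
    (range (a + 1) ×ˢ range (b + 1) + T).card = a * b + a * n + m * b + T.card := by
  obtain ⟨d12, d13, d14, d23, d24, d34⟩ := disjoint_pieces T a b m n
  rw [rect_add_eq_union hT hne hwidth hheight, card_union_of_disjoint, card_union_of_disjoint,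
    card_union_of_disjoint d12, card_image_of_injective _ (add_left_injective _)]
  · simp
  · exact disjoint_union_left.2 ⟨d13, d23⟩
  · exact disjoint_union_left.2 ⟨disjoint_union_left.2 ⟨d14, d24⟩, d34⟩

end RectangleAddLowerSet

open RectangleAddLowerSet in
theorem stmt4_general (ℓ h m n δ : ℕ) (hℓ : 0 < ℓ) (hh : 0 < h)
    (T : Finset (ℕ × ℕ))
    (hdc : ∀ p ∈ T, ∀ q : ℕ × ℕ, q.1 ≤ p.1 → q.2 ≤ p.2 → q ∈ T)
    (hwid : (m - 1, 0) ∈ T) (hht : (0, n - 1) ∈ T)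
    (hb : ∀ p ∈ T, p.1 < m ∧ p.2 < n) (hδ : δ = T.card)
    (S U1 U2 U3 U4 : Finset (ℕ × ℕ))
    (hS : S = Finset.range ℓ ×ˢ Finset.range h)
    (hU1 : U1 = Finset.range (ℓ - 1) ×ˢ Finset.range (h - 1))
    (hU2 : U2 = Finset.range (ℓ - 1) ×ˢ Finset.Ico (h - 1) (h - 1 + n))
    (hU3 : U3 = Finset.Ico (ℓ - 1) (ℓ - 1 + m) ×ˢ Finset.range (h - 1))
    (hU4 : U4 = T.image (fun p => (p.1 + (ℓ - 1), p.2 + (h - 1)))) :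
    S + T = U1 ∪ U2 ∪ U3 ∪ U4 ∧
    Disjoint U1 U2 ∧ Disjoint U1 U3 ∧ Disjoint U1 U4 ∧
    Disjoint U2 U3 ∧ Disjoint U2 U4 ∧ Disjoint U3 U4 ∧
    (S + T).card = (ℓ - 1) * (h - 1) + (ℓ - 1) * n + m * (h - 1) + δ := by
  have hT : IsLowerSet (T : Set (ℕ × ℕ)) := fun p q hqp hp => hdc p hp q hqp.1 hqp.2
  have hwidth := mk_zero_mem_iff hT (fun p hp => (hb p hp).1) hwid
  have hheight := zero_mk_mem_iff hT (fun p hp => (hb p hp).2) hht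
  obtain ⟨a, rfl⟩ : ∃ a, ℓ = a + 1 := ⟨ℓ - 1, by omega⟩
  obtain ⟨b, rfl⟩ : ∃ b, h = b + 1 := ⟨h - 1, by omega⟩
  simp only [Nat.add_sub_cancel] at hU1 hU2 hU3 hU4 ⊢
  subst hS hU1 hU2 hU3 hU4 hδ
  obtain ⟨d12, d13, d14, d23, d24, d34⟩ := disjoint_pieces T a b m n
  exact ⟨rect_add_eq_union hT ⟨_, hwid⟩ hwidth hheight a b, d12, d13, d14, d23, d24, d34,
    card_rect_add hT ⟨_, hwid⟩ hwidth hheight a b⟩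

/-- Decomposition of the Minkowski sum of a rectangle `S = {0..ℓ-1}×{0..h-1}` with a
finite initial segment `T` of height `n`, width `m`, cardinality `δ`, as the disjoint
union of four pieces; consequently `|S+T| = (ℓ-1)(h-1) + (ℓ-1)n + m(h-1) + δ`. -/
theorem stmt4 (ℓ h m n δ : ℕ) (hℓ : 0 < ℓ) (hh : 0 < h) (hn : 0 < n) (hm : 0 < m)
    (T : Finset (ℕ × ℕ))
    (hdc : ∀ p ∈ T, ∀ q : ℕ × ℕ, q.1 ≤ p.1 → q.2 ≤ p.2 → q ∈ T)
    (hwid : (m - 1, 0) ∈ T) (hht : (0, n - 1) ∈ T)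
    (hb : ∀ p ∈ T, p.1 < m ∧ p.2 < n) (hδ : δ = T.card)
    (S U1 U2 U3 U4 : Finset (ℕ × ℕ))
    (hS : S = Finset.range ℓ ×ˢ Finset.range h)
    (hU1 : U1 = Finset.range (ℓ - 1) ×ˢ Finset.range (h - 1))
    (hU2 : U2 = Finset.range (ℓ - 1) ×ˢ Finset.Ico (h - 1) (h - 1 + n))
    (hU3 : U3 = Finset.Ico (ℓ - 1) (ℓ - 1 + m) ×ˢ Finset.range (h - 1))
    (hU4 : U4 = T.image (fun p => (p.1 + (ℓ - 1), p.2 + (h - 1)))) :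
    S + T = U1 ∪ U2 ∪ U3 ∪ U4 ∧
    Disjoint U1 U2 ∧ Disjoint U1 U3 ∧ Disjoint U1 U4 ∧
    Disjoint U2 U3 ∧ Disjoint U2 U4 ∧ Disjoint U3 U4 ∧
    (S + T).card = (ℓ - 1) * (h - 1) + (ℓ - 1) * n + m * (h - 1) + δ :=
  stmt4_general ℓ h m n δ hℓ hh T hdc hwid hht hb hδ S U1 U2 U3 U4 hS hU1 hU2 hU3 hU4
end

section
/- The shell T' of a finite initial segment T contains T, has cardinality at most 2·|T|, and the number σ of its inner corners is O(log |T|) (more precisely, the widths m_{i_j} of its generators at least double at each step, so σ ≤ log₂(m_s) + 1). -/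
/-!
Every constraint defining `T'` is one of the constraints defining `T`, so `T ⊆ T'`.
Halving the first coordinate maps `T'` into `T`, with fibres of size at most two: a point
obeying the constraint of the generator `idx j` obeys, once halved, the constraint of every
generator `i` with `idx (j + 1) < i ≤ idx j`, because the maximality in the choice of
`idx (j + 1)` gives `m (idx j) ≤ 2 * m i`, and `n` is decreasing. Finally the widths
`m (idx j)` more than double at each step of the chain, so `2 ^ (σ - 1) ≤ m s`.
-/

open Finset

lemma Nat.exists_lt_and_not_succ {p : ℕ → Prop} {σ : ℕ} (h0 : p 0) (hσ : ¬ p σ) :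
    ∃ j < σ, p j ∧ ¬ p (j + 1) := by
  induction σ with
  | zero => exact absurd h0 hσ
  | succ k ih =>
    by_cases hk : p k
    · exact ⟨k, k.lt_succ_self, hk, hσ⟩
    · obtain ⟨j, hj, hpj⟩ := ih hk
      exact ⟨j, hj.trans k.lt_succ_self, hpj⟩

lemma Nat.two_pow_le_of_two_mul_lt {a : ℕ → ℕ} {k : ℕ} (h : ∀ j ≤ k, 2 * a (j + 1) < a j) :
    2 ^ k ≤ a 0 := by
  induction k generalizing a with
  | zero =>
    have := h 0 le_rfl
    rw [pow_zero]
    omega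
  | succ k ih =>
    have htail : 2 ^ k ≤ a 1 := ih (a := fun j => a (j + 1)) fun j hj => h (j + 1) (by omega)
    have hhead : 2 * a 1 < a 0 := h 0 (Nat.zero_le _)
    rw [pow_succ]
    omega

lemma card_le_two_mul_card_of_div_two_mem {A B : Finset (ℕ × ℕ)}
    (h : ∀ p ∈ A, (p.1 / 2, p.2) ∈ B) : #A ≤ 2 * #B := by
  refine card_le_mul_card_image_of_maps_to h 2 fun q _ => ?_
  have hfibre : {p ∈ A | (p.1 / 2, p.2) = q} ⊆ {(2 * q.1, q.2), (2 * q.1 + 1, q.2)} := by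
    intro p hp
    obtain ⟨-, rfl⟩ := mem_filter.1 hp
    simp only [mem_insert, mem_singleton, Prod.ext_iff, and_true]
    omega
  exact (card_le_card hfibre).trans card_le_two

lemma div_two_mem_of_mem_shell {s σ : ℕ} {m n idx : ℕ → ℕ} (hm0 : m 0 = 0)
    (hn : ∀ i < s, n (i + 1) < n i) (hi0 : idx 0 = s) (hiσ : idx σ = 0)
    (hidx : ∀ j ≤ σ, idx j ≤ s)
    (hmax : ∀ j < σ, ∀ k, idx (j + 1) < k → k < idx j → ¬ (2 * m k < m (idx j)))
    {a b : ℕ} (hab : ∀ j ≤ σ, a < m (idx j) ∨ b < n (idx j)) :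
    ∀ i ≤ s, a / 2 < m i ∨ b < n i := by
  intro i hi
  rcases i.eq_zero_or_pos with rfl | hipos
  · simpa [hiσ, hm0] using hab σ le_rfl
  obtain ⟨j, hjσ, hij, hij1⟩ :=
    Nat.exists_lt_and_not_succ (p := fun j => i ≤ idx j) (σ := σ) (by omega) (by omega)
  replace hij1 : idx (j + 1) < i := not_le.1 hij1
  rcases hab j hjσ.le with ha | hb
  · have hwidth : m (idx j) ≤ 2 * m i := by
      rcases hij.eq_or_lt with h | h
      · rw [← h]; omega
      · exact not_lt.1 (hmax j hjσ i hij1 h)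
    omega
  · exact Or.inr <| hb.trans_le <|
      (strictAntiOn_Iic_of_succ_lt hn).antitoneOn (Set.mem_Iic.2 hi) (hidx j hjσ.le) hij

theorem stmt5_general (s σ : ℕ) (m n : ℕ → ℕ) (idx : ℕ → ℕ)
    (T T' : Finset (ℕ × ℕ))
    (hm0 : m 0 = 0)
    (hn : ∀ i < s, n (i + 1) < n i)
    (hi0 : idx 0 = s) (hiσ : idx σ = 0)
    (hstep : ∀ j < σ, idx (j + 1) < idx j ∧ 2 * m (idx (j + 1)) < m (idx j) ∧
      ∀ k, idx (j + 1) < k → k < idx j → ¬ (2 * m k < m (idx j)))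
    (hT : ∀ p : ℕ × ℕ, p ∈ T ↔ ∀ i ≤ s, p.1 < m i ∨ p.2 < n i)
    (hT' : ∀ p : ℕ × ℕ, p ∈ T' ↔ ∀ j ≤ σ, p.1 < m (idx j) ∨ p.2 < n (idx j)) :
    T ⊆ T' ∧ T'.card ≤ 2 * T.card ∧ σ ≤ Nat.log 2 (m s) + 1 := by
  have hidx : ∀ j ≤ σ, idx j ≤ s := fun j hj => hi0 ▸
    (strictAntiOn_Iic_of_succ_lt fun j hj => (hstep j hj).1).antitoneOn
      (Set.mem_Iic.2 (Nat.zero_le σ)) (Set.mem_Iic.2 hj) (Nat.zero_le j)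
  refine ⟨fun p hp => (hT' p).2 fun j hj => (hT p).1 hp _ (hidx j hj), ?_, ?_⟩
  · exact card_le_two_mul_card_of_div_two_mem fun p hp =>
      (hT _).2 (div_two_mem_of_mem_shell hm0 hn hi0 hiσ hidx
        (fun j hj => (hstep j hj).2.2) ((hT' p).1 hp))
  · cases σ with
    | zero => omega
    | succ k =>
      have hpow : 2 ^ k ≤ m s :=
        hi0 ▸ Nat.two_pow_le_of_two_mul_lt (a := m ∘ idx) fun j hj => (hstep j (by omega)).2.1
      have := Nat.le_log_of_pow_le one_lt_two hpow
      omega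

/-- The shell `T'` of a finite initial segment `T` (obtained by keeping the generators
indexed by `idx σ = 0 < ... < idx 0 = s`, where the widths at least double at each step)
contains `T`, has cardinality at most `2 |T|`, and its number of inner corners `σ`
satisfies `σ ≤ log₂ (m s) + 1`. -/
theorem stmt5 (s σ : ℕ) (hs : 0 < s) (m n : ℕ → ℕ) (idx : ℕ → ℕ)
    (T T' : Finset (ℕ × ℕ))
    (hm0 : m 0 = 0) (hns : n s = 0)
    (hm : ∀ i < s, m i < m (i + 1)) (hn : ∀ i < s, n (i + 1) < n i)
    (hi0 : idx 0 = s) (hiσ : idx σ = 0)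
    (hstep : ∀ j < σ, idx (j + 1) < idx j ∧ 2 * m (idx (j + 1)) < m (idx j) ∧
      ∀ k, idx (j + 1) < k → k < idx j → ¬ (2 * m k < m (idx j)))
    (hT : ∀ p : ℕ × ℕ, p ∈ T ↔ ∀ i ≤ s, p.1 < m i ∨ p.2 < n i)
    (hT' : ∀ p : ℕ × ℕ, p ∈ T' ↔ ∀ j ≤ σ, p.1 < m (idx j) ∨ p.2 < n (idx j)) :
    T ⊆ T' ∧ T'.card ≤ 2 * T.card ∧ σ ≤ Nat.log 2 (m s) + 1 :=
  stmt5_general s σ m n idx T T' hm0 hn hi0 hiσ hstep hT hT'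
end

section
/- For s a power of two and the paving rule h_i = 2^{v₂(i)} (2-adic valuation), the rectangles R_{i} = {i,...,i+h_i-1} × {s-i,...,s-i+h_i-1} for i = 1,...,s-1 are pairwise disjoint and their union equals {(a,b) ∈ {0,...,s-1}² : a + b ≥ s}. -/
/-!
Write `ν = v₂`. For `v < u`, the point `i ∈ (v, u]` of largest 2-adic valuation is the unique
`i` with `v ∈ [i - 2^ν(i), i)` and `u ∈ [i, i + 2^ν(i))`: both `i ± 2^ν(i)` have larger
valuation, so they lie outside `(v, u]`, and two such points `i, j` with `ν i ≤ ν j` are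
multiples of `2^ν(i)` at distance less than `2^ν(i)`. The map `(a, b) ↦ (s - 1 - b, a)` turns
the rectangle `R_i` into `[i - h_i, i) × [i, i + h_i)`, which for `s = 2^k` and `0 < i < s`
lies inside `[0, s)²` because `h_i` divides both `i` and `s`, and turns `a + b ≥ s` into `v < u`.
-/

open Finset

theorem two_pow_succ_padicValNat_dvd_add_and_sub {n : ℕ} (hn : n ≠ 0) :
    2 ^ (padicValNat 2 n + 1) ∣ n + 2 ^ padicValNat 2 n ∧
      2 ^ (padicValNat 2 n + 1) ∣ n - 2 ^ padicValNat 2 n := by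
  obtain ⟨c, hc⟩ : 2 ^ padicValNat 2 n ∣ n := pow_padicValNat_dvd
  have hc_odd : ¬ 2 ∣ c := by
    rintro ⟨d, rfl⟩
    exact pow_succ_padicValNat_not_dvd (p := 2) hn ⟨d, by rw [pow_succ, mul_assoc, ← hc]⟩
  obtain ⟨e, he⟩ : 2 ∣ c + 1 := by omega
  obtain ⟨f, hf⟩ : 2 ∣ c - 1 := by omega
  refine ⟨⟨e, ?_⟩, ⟨f, ?_⟩⟩
  · rw [pow_succ, mul_assoc, ← he, mul_add_one, ← hc]
  · rw [pow_succ, mul_assoc, ← hf, Nat.mul_sub_one, ← hc]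

/-- `v` and `u` lie in the left and right halves of the dyadic interval `[i - 2^ν, i + 2^ν)`,
`ν = v₂ i`. -/
def IsDyadicSplit (i v u : ℕ) : Prop :=
  v < i ∧ i ≤ u ∧ u < i + 2 ^ padicValNat 2 i ∧ i ≤ v + 2 ^ padicValNat 2 i

theorem exists_isDyadicSplit {v u : ℕ} (hvu : v < u) : ∃ i, IsDyadicSplit i v u := by
  obtain ⟨i, hi, hmax⟩ := exists_max_image (Ioc v u) (padicValNat 2) ⟨u, by simp [hvu]⟩
  rw [mem_Ioc] at hi
  have hi0 : i ≠ 0 := by omega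
  obtain ⟨hadd, hsub⟩ := two_pow_succ_padicValNat_dvd_add_and_sub hi0
  have not_mem_of_dvd : ∀ x, x ≠ 0 → 2 ^ (padicValNat 2 i + 1) ∣ x → x ∉ Ioc v u :=
    fun x hx hdvd hmem => by
      have := (padicValNat_dvd_iff_le hx).1 hdvd
      have := hmax x hmem
      omega
  refine ⟨i, hi.1, hi.2, ?_, ?_⟩
  · by_contra hle
    exact not_mem_of_dvd _ (by omega) hadd (mem_Ioc.2 ⟨by omega, by omega⟩)
  · by_contra hlt
    exact not_mem_of_dvd _ (by omega) hsub (mem_Ioc.2 ⟨by omega, by omega⟩)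

theorem IsDyadicSplit.unique {i j v u : ℕ} (hi : IsDyadicSplit i v u)
    (hj : IsDyadicSplit j v u) : i = j := by
  wlog hle : padicValNat 2 i ≤ padicValNat 2 j generalizing i j
  · exact (this hj hi (by omega)).symm
  obtain ⟨-, -, hui, hiv⟩ := hi
  obtain ⟨hvj, hju, -, -⟩ := hj
  have hji : j < i + 2 ^ padicValNat 2 i := by omega
  have hij : i < j + 2 ^ padicValNat 2 i := by omega
  obtain ⟨a, ha⟩ : 2 ^ padicValNat 2 i ∣ i := pow_padicValNat_dvd
  obtain ⟨b, hb⟩ : 2 ^ padicValNat 2 i ∣ j := (pow_dvd_pow 2 hle).trans pow_padicValNat_dvd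
  generalize 2 ^ padicValNat 2 i = g at ha hb hji hij
  subst ha hb
  rw [← mul_add_one] at hji hij
  have := Nat.lt_of_mul_lt_mul_left hji
  have := Nat.lt_of_mul_lt_mul_left hij
  rw [show a = b by omega]

theorem two_pow_padicValNat_le_two_pow_sub {i k : ℕ} (hi0 : 0 < i) (hik : i < 2 ^ k) :
    2 ^ padicValNat 2 i ≤ 2 ^ k - i := by
  have hdvd_i : 2 ^ padicValNat 2 i ∣ i := pow_padicValNat_dvd
  have hlt : padicValNat 2 i < k :=
    (Nat.pow_lt_pow_iff_right one_lt_two).1 ((Nat.le_of_dvd hi0 hdvd_i).trans_lt hik)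
  exact Nat.le_of_dvd (by omega) (Nat.dvd_sub (pow_dvd_pow 2 hlt.le) hdvd_i)

theorem mem_Ico_product_Ico_iff_isDyadicSplit {s i a b : ℕ} (hi0 : 0 < i)
    (hi : i + 2 ^ padicValNat 2 i ≤ s) :
    (a, b) ∈ Ico i (i + 2 ^ padicValNat 2 i) ×ˢ Ico (s - i) (s - i + 2 ^ padicValNat 2 i) ↔
      a < s ∧ b < s ∧ IsDyadicSplit i (s - 1 - b) a := by
  have : 2 ^ padicValNat 2 i ≤ i := Nat.le_of_dvd hi0 pow_padicValNat_dvd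
  simp only [mem_product, mem_Ico, IsDyadicSplit]
  omega

theorem stmt8_general (k s : ℕ) (hs : s = 2 ^ k)
    (h : ℕ → ℕ) (hh : ∀ i, h i = 2 ^ (padicValNat 2 i))
    (R : ℕ → Finset (ℕ × ℕ))
    (hR : ∀ i, R i = Finset.Ico i (i + h i) ×ˢ Finset.Ico (s - i) (s - i + h i)) :
    (∀ i ∈ Finset.Ico 1 s, ∀ j ∈ Finset.Ico 1 s, i ≠ j → Disjoint (R i) (R j)) ∧
    (Finset.Ico 1 s).biUnion R =
      (Finset.range s ×ˢ Finset.range s).filter (fun p => s ≤ p.1 + p.2) := by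
  have hmem : ∀ i ∈ Ico 1 s, ∀ a b,
      (a, b) ∈ R i ↔ a < s ∧ b < s ∧ IsDyadicSplit i (s - 1 - b) a := by
    intro i hi a b
    rw [mem_Ico] at hi
    have hle := two_pow_padicValNat_le_two_pow_sub hi.1 (hs ▸ hi.2)
    rw [hR, hh]
    exact mem_Ico_product_Ico_iff_isDyadicSplit hi.1 (by omega)
  refine ⟨fun i hi j hj hij => disjoint_left.2 fun ⟨a, b⟩ hai haj => ?_, ?_⟩
  · exact hij (((hmem i hi a b).1 hai).2.2.unique ((hmem j hj a b).1 haj).2.2)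
  ext ⟨a, b⟩
  simp only [mem_biUnion, mem_filter, mem_product, mem_range]
  constructor
  · rintro ⟨i, hi, hab⟩
    obtain ⟨ha, hb, hsplit⟩ := (hmem i hi a b).1 hab
    exact ⟨⟨ha, hb⟩, by unfold IsDyadicSplit at hsplit; omega⟩
  · rintro ⟨⟨ha, hb⟩, hab⟩
    obtain ⟨i, hsplit⟩ := exists_isDyadicSplit (show s - 1 - b < a by omega)
    have hi : i ∈ Ico 1 s := by unfold IsDyadicSplit at hsplit; rw [mem_Ico]; omega
    exact ⟨i, hi, (hmem i hi a b).2 ⟨ha, hb, hsplit⟩⟩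

/-- For `s` a power of two and the paving rule `h_i = 2^(v₂ i)`, the rectangles
`R_i = {i,...,i+h_i-1} × {s-i,...,s-i+h_i-1}`, `i = 1,...,s-1`, are pairwise disjoint
and their union is `{(a,b) ∈ {0,...,s-1}² : a + b ≥ s}`. -/
theorem stmt8 (k s : ℕ) (hk : 1 ≤ k) (hs : s = 2 ^ k)
    (h : ℕ → ℕ) (hh : ∀ i, h i = 2 ^ (padicValNat 2 i))
    (R : ℕ → Finset (ℕ × ℕ))
    (hR : ∀ i, R i = Finset.Ico i (i + h i) ×ˢ Finset.Ico (s - i) (s - i + h i)) :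
    (∀ i ∈ Finset.Ico 1 s, ∀ j ∈ Finset.Ico 1 s, i ≠ j → Disjoint (R i) (R j)) ∧
    (Finset.Ico 1 s).biUnion R =
      (Finset.range s ×ˢ Finset.range s).filter (fun p => s ≤ p.1 + p.2) :=
  stmt8_general k s hs h hh R hR
end

section
/- Let s ≥ 1, let d₁,...,d_s be positive integers with partial sums m_i = d₁+...+d_i, set d_i = 0 and m_i = m_s for i > s, and define ℓ_i = h_i = 2^{v₂(i)} for all i ≥ 1. Then Σ_{i=1}^{s-1} (m_{i+ℓ_i} - m_i) ≤ m_s · ⌈log₂ s⌉; in particular this sum is O(m_s log s). -/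
/-!
Group the indices `i < s` by `κ = v₂ i`; only `κ < ⌈log₂ s⌉` occur. Within one class all `i`
are multiples of `2^κ` and `ℓ i = 2^κ`, so, `m` being monotone, the class contributes at most
the telescoping sum `∑_q (m ((q+1) 2^κ) - m (q 2^κ)) ≤ m s`.
-/

open Finset

lemma Nat.sum_tsub_succ_le_of_monotone {g : ℕ → ℕ} (hg : Monotone g) {M : ℕ}
    (hM : ∀ n, g n ≤ M) (S : Finset ℕ) : ∑ q ∈ S, (g (q + 1) - g q) ≤ M :=
  calc ∑ q ∈ S, (g (q + 1) - g q)
      ≤ ∑ q ∈ range (S.sup id).succ, (g (q + 1) - g q) :=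
        sum_le_sum_of_subset S.subset_range_sup_succ
    _ = g (S.sup id).succ - g 0 := sum_range_tsub hg _
    _ ≤ M := (Nat.sub_le _ _).trans (hM _)

lemma Nat.sum_tsub_add_le_of_forall_dvd {f : ℕ → ℕ} (hf : Monotone f) {M : ℕ}
    (hM : ∀ n, f n ≤ M) {k : ℕ} {T : Finset ℕ} (hT : ∀ i ∈ T, k ∣ i) :
    ∑ i ∈ T, (f (i + k) - f i) ≤ M := by
  have hinj : Set.InjOn (· / k) T := fun i hi j hj hij => by
    rw [← Nat.div_mul_cancel (hT i hi), ← Nat.div_mul_cancel (hT j hj)]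
    exact congrArg (· * k) hij
  have hterm : ∀ i ∈ T, f (i + k) - f i = f ((i / k + 1) * k) - f (i / k * k) := fun i hi => by
    rw [Nat.add_one_mul, Nat.div_mul_cancel (hT i hi)]
  rw [sum_congr rfl hterm,
    ← sum_image (f := fun q => f ((q + 1) * k) - f (q * k)) hinj]
  exact Nat.sum_tsub_succ_le_of_monotone (g := fun q => f (q * k))
    (hf.comp fun _ _ h => Nat.mul_le_mul_right k h) (fun _ => hM _) _

lemma Nat.sum_range_le_of_forall_eq_zero {e : ℕ → ℕ} {s : ℕ} (he : ∀ j, s ≤ j → e j = 0)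
    (n : ℕ) : ∑ j ∈ range n, e j ≤ ∑ j ∈ range s, e j :=
  calc ∑ j ∈ range n, e j
      ≤ ∑ j ∈ range (max n s), e j :=
        sum_le_sum_of_subset (range_subset_range.2 (le_max_left _ _))
    _ = ∑ j ∈ range s, e j := (sum_subset (range_subset_range.2 (le_max_right _ _))
          fun j _ hj => he j (not_lt.1 (mem_range.not.1 hj))).symm

lemma padicValNat_lt_clog {p i s : ℕ} (hp : 1 < p) (hi : 0 < i) (his : i < s) :
    padicValNat p i < Nat.clog p s := by
  have hpow : p ^ padicValNat p i < p ^ Nat.clog p s :=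
    calc p ^ padicValNat p i ≤ i := Nat.le_of_dvd hi pow_padicValNat_dvd
      _ < s := his
      _ ≤ p ^ Nat.clog p s := Nat.le_pow_clog hp s
  exact (Nat.pow_lt_pow_iff_right hp).1 hpow

theorem stmt9_general (s : ℕ) (d : ℕ → ℕ)
    (hd0 : ∀ i, s < i → d i = 0)
    (m : ℕ → ℕ) (hm : ∀ i, m i = ∑ j ∈ Finset.range i, d (j + 1))
    (ℓ : ℕ → ℕ) (hℓ : ∀ i, ℓ i = 2 ^ (padicValNat 2 i)) :
    ∑ i ∈ Finset.Ico 1 s, (m (i + ℓ i) - m i) ≤ m s * Nat.clog 2 s := by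
  have hmono : Monotone m := fun a b hab => by
    simp only [hm]
    exact sum_le_sum_of_subset (range_subset_range.2 hab)
  have hcap : ∀ n, m n ≤ m s := fun n => by
    simp only [hm]
    exact Nat.sum_range_le_of_forall_eq_zero (fun j hj => hd0 _ (by omega)) n
  have hmaps : ∀ i ∈ Ico 1 s, padicValNat 2 i ∈ range (Nat.clog 2 s) := fun i hi => by
    obtain ⟨hi1, his⟩ := mem_Ico.1 hi
    exact mem_range.2 (padicValNat_lt_clog one_lt_two hi1 his)
  have hclass : ∀ κ ∈ range (Nat.clog 2 s),
      ∑ i ∈ (Ico 1 s).filter (padicValNat 2 · = κ), (m (i + ℓ i) - m i) ≤ m s := by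
    intro κ _
    have hℓκ : ∀ i ∈ (Ico 1 s).filter (padicValNat 2 · = κ), ℓ i = 2 ^ κ := fun i hi => by
      rw [hℓ, (mem_filter.1 hi).2]
    rw [sum_congr rfl fun i hi => by rw [hℓκ i hi]]
    refine Nat.sum_tsub_add_le_of_forall_dvd hmono hcap fun i hi => ?_
    rw [← (mem_filter.1 hi).2]
    exact pow_padicValNat_dvd
  calc ∑ i ∈ Ico 1 s, (m (i + ℓ i) - m i)
      = ∑ κ ∈ range (Nat.clog 2 s),
          ∑ i ∈ (Ico 1 s).filter (padicValNat 2 · = κ), (m (i + ℓ i) - m i) :=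
        (sum_fiberwise_of_maps_to hmaps _).symm
    _ ≤ #(range (Nat.clog 2 s)) • m s := sum_le_card_nsmul _ _ _ hclass
    _ = m s * Nat.clog 2 s := by rw [card_range, smul_eq_mul, Nat.mul_comm]

/-- With `m i = d₁ + ... + d_i` (and `d_i = 0` for `i > s`, so `m i = m s` there) and
the paving rule `ℓ_i = 2^(v₂ i)`, one has `∑_{i=1}^{s-1} (m (i+ℓ_i) - m i) ≤ m s * ⌈log₂ s⌉`. -/
theorem stmt9 (s : ℕ) (hs : 1 ≤ s) (d : ℕ → ℕ)
    (hd : ∀ i, 1 ≤ i → i ≤ s → 0 < d i) (hd0 : ∀ i, s < i → d i = 0)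
    (m : ℕ → ℕ) (hm : ∀ i, m i = ∑ j ∈ Finset.range i, d (j + 1))
    (ℓ : ℕ → ℕ) (hℓ : ∀ i, ℓ i = 2 ^ (padicValNat 2 i)) :
    ∑ i ∈ Finset.Ico 1 s, (m (i + ℓ i) - m i) ≤ m s * Nat.clog 2 s :=
  stmt9_general s d hd0 m hm ℓ hℓ
end

section
/- Let G = (g₀,...,g_s) be the minimal reduced lexicographic Gröbner basis (y ≻ x) of a zero-dimensional ideal I ⊆ K[x,y] with initial terms y^{n₀}, x^{m₁}y^{n₁}, ..., x^{m_s}. Then for each i there exist monic polynomials D₁,...,D_s ∈ K[x] of degrees d_i = m_i - m_{i-1} such that g_i = M_i G_i with M_i = D₁···D_i and G_i ∈ K[x,y] monic of degree n_i in y; in particular g_s = D₁···D_s ∈ K[x] and the polynomial coefficient of y^{n_i} in g_i equals M_i. -/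
/-!
Write `M i` for the leading coefficient in `y` of `g i`. If `n k ≤ v < n (k - 1)`, the
coefficients of `y ^ v` of the elements of `I` of `y`-degree at most `v` form the ideal `(M k)` of
`K[x]`: the remainder modulo `M k` of such a coefficient is again one, and its `x`-degree is below
`m k`, which the staircase forbids unless it vanishes. Taking `v = n i` shows `M i ∣ M k` for
`i ≤ k`, which yields the monic quotients `D i = M i / M (i - 1)`. That `M i` also divides the
other coefficients of `g i` follows by descending induction on `i` and then on the coefficient.
-/

open Polynomial

theorem exists_natDegree_sub_mul_C_mul_le {R : Type*} [CommRing R] [IsDomain R] {G : R[X]}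
    (hG : G.Monic) {L : R} {v : ℕ} (hGv : G.natDegree ≤ v) (f : R[X])
    (hf : ∀ w, v < w → L ∣ f.coeff w) : ∃ q, (f - q * (C L * G)).natDegree ≤ v := by
  induction hd : f.natDegree using Nat.strong_induction_on generalizing f with
  | _ d ih =>
  by_cases hdv : d ≤ v
  · exact ⟨0, by simpa [hd]⟩
  obtain ⟨t, ht⟩ := hf d (by omega)
  have hf0 : f ≠ 0 := by rintro rfl; rw [natDegree_zero] at hd; omega
  have hP : (X ^ (d - G.natDegree) * G).Monic := (monic_X_pow _).mul hG
  have hPdeg : (X ^ (d - G.natDegree) * G).natDegree = d := by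
    rw [(monic_X_pow _).natDegree_mul hG, natDegree_X_pow]; omega
  set top := C t * X ^ (d - G.natDegree) * (C L * G)
  have htop : top = C f.leadingCoeff * (X ^ (d - G.natDegree) * G) := by
    rw [leadingCoeff, hd, ht, C_mul]; ring
  have hlt : (f - top).natDegree < d := by
    rcases eq_or_ne (f - top) 0 with h0 | h0
    · rw [h0, natDegree_zero]; omega
    rw [← hd, natDegree_lt_natDegree_iff h0]
    refine degree_sub_lt_left ?_ hf0 ?_
    · rw [htop, degree_C_mul (leadingCoeff_ne_zero.2 hf0), degree_eq_natDegree hf0,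
        degree_eq_natDegree hP.ne_zero, hPdeg, hd]
    · rw [htop, leadingCoeff_mul, leadingCoeff_C, hP.leadingCoeff, mul_one]
  have hftop : ∀ w, v < w → L ∣ (f - top).coeff w := fun w hw => by
    rw [coeff_sub, show top = C L * (C t * X ^ (d - G.natDegree) * G) by ring, coeff_C_mul]
    exact dvd_sub (hf w hw) (dvd_mul_right _ _)
  obtain ⟨q, hq⟩ := ih _ hlt (f - top) hftop rfl
  exact ⟨q + C t * X ^ (d - G.natDegree), by convert hq using 2; ring⟩

theorem exists_monic_of_leadingCoeff_dvd_coeff {R : Type*} [CommRing R] [IsDomain R] {p : R[X]}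
    (hp : p ≠ 0) (h : ∀ v, p.leadingCoeff ∣ p.coeff v) :
    ∃ G : R[X], G.Monic ∧ G.natDegree = p.natDegree ∧ p = C p.leadingCoeff * G := by
  obtain ⟨G, hG⟩ := (C_dvd_iff_dvd_coeff _ _).2 h
  have hlc : p.leadingCoeff ≠ 0 := leadingCoeff_ne_zero.2 hp
  refine ⟨G, ?_, by rw [hG, natDegree_C_mul hlc], hG⟩
  have := congrArg leadingCoeff hG
  rw [leadingCoeff_mul, leadingCoeff_C] at this
  exact (mul_left_cancel₀ hlc (by rw [mul_one]; exact this)).symm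

theorem exists_monic_prod_Icc_eq {R : Type*} [CommRing R] {M : ℕ → R[X]} {s : ℕ}
    (hM0 : M 0 = 1) (hmon : ∀ i ≤ s, (M i).Monic) (hdvd : ∀ i < s, M i ∣ M (i + 1)) :
    ∃ D : ℕ → R[X],
      (∀ i, 1 ≤ i → i ≤ s →
        (D i).Monic ∧ (D i).natDegree = (M i).natDegree - (M (i - 1)).natDegree) ∧
      ∀ i ≤ s, ∏ j ∈ Finset.Icc 1 i, D j = M i := by
  have hmul : ∀ i < s, M i * (M (i + 1) /ₘ M i) = M (i + 1) := fun i hi => by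
    simpa [(modByMonic_eq_zero_iff_dvd (hmon i hi.le)).2 (hdvd i hi)] using
      modByMonic_add_div (M (i + 1)) (M i)
  refine ⟨fun i => M i /ₘ M (i - 1), fun i h1 hi => ?_, fun i hi => ?_⟩
  · obtain ⟨i, rfl⟩ := Nat.exists_eq_add_of_le' h1
    have hprod := hmul i (by omega)
    have hmon' : (M (i + 1) /ₘ M i).Monic :=
      (hmon i (by omega)).of_mul_monic_left (by rw [hprod]; exact hmon _ hi)
    refine ⟨hmon', ?_⟩
    have hdeg := congrArg natDegree hprod
    rw [(hmon i (by omega)).natDegree_mul hmon'] at hdeg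
    simp only [Nat.add_sub_cancel]
    omega
  · induction i with
    | zero => simp [hM0]
    | succ i ih =>
      rw [Finset.prod_Icc_succ_top (by omega), ih (by omega), Nat.add_sub_cancel, hmul i hi]

/-- `K[x, y]` is encoded as `K[x][y]`, with `y` the outer variable, so that the lex (`y ≻ x`)
initial monomial of a nonzero `f` is `x ^ f.leadingCoeff.natDegree * y ^ f.natDegree`;
`exists_le` says that the initial monomials `x ^ m i * y ^ n i` of the `g i` generate the
initial ideal of `I`. -/
structure IsLexGroebnerStaircase {K : Type*} [Field K] (I : Ideal K[X][X]) (s : ℕ)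
    (m n : ℕ → ℕ) (g : ℕ → K[X][X]) : Prop where
  strictMonoOn_m : StrictMonoOn m (Set.Iic s)
  strictAntiOn_n : StrictAntiOn n (Set.Iic s)
  n_last : n s = 0
  mem : ∀ i ≤ s, g i ∈ I
  natDegree_eq : ∀ i ≤ s, (g i).natDegree = n i
  monic_leadingCoeff : ∀ i ≤ s, (g i).leadingCoeff.Monic
  natDegree_leadingCoeff : ∀ i ≤ s, (g i).leadingCoeff.natDegree = m i
  exists_le : ∀ f ∈ I, f ≠ 0 → ∃ i ≤ s, m i ≤ f.leadingCoeff.natDegree ∧ n i ≤ f.natDegree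

namespace IsLexGroebnerStaircase

variable {K : Type*} [Field K] {I : Ideal K[X][X]} {s : ℕ} {m n : ℕ → ℕ} {g : ℕ → K[X][X]}

theorem m_le_natDegree_leadingCoeff (hB : IsLexGroebnerStaircase I s m n g) {f : K[X][X]}
    (hf : f ∈ I) (hf0 : f ≠ 0) {k : ℕ} (hk : k ≤ s) (hlt : ∀ j < k, f.natDegree < n j) :
    m k ≤ f.leadingCoeff.natDegree := by
  obtain ⟨j, hjs, hmj, hnj⟩ := hB.exists_le f hf hf0
  have hkj : k ≤ j := not_lt.1 fun h => (hlt j h).not_ge hnj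
  exact (hB.strictMonoOn_m.monotoneOn hk hjs hkj).trans hmj

theorem leadingCoeff_dvd_coeff_of_mem (hB : IsLexGroebnerStaircase I s m n g) {k v : ℕ}
    (hk : k ≤ s) (hkv : n k ≤ v) (hlt : ∀ j < k, v < n j) {f : K[X][X]} (hf : f ∈ I)
    (hfv : f.natDegree ≤ v) : (g k).leadingCoeff ∣ f.coeff v := by
  set M := (g k).leadingCoeff
  set p := f - C (f.coeff v / M) * (g k * X ^ (v - n k))
  have hp : p ∈ I := I.sub_mem hf (I.mul_mem_left _ (I.mul_mem_right _ (hB.mem k hk)))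
  have hpv : p.coeff v = f.coeff v % M := by
    rw [coeff_sub, coeff_C_mul, coeff_mul_X_pow', if_pos (Nat.sub_le _ _),
      Nat.sub_sub_self hkv, ← hB.natDegree_eq k hk, EuclideanDomain.mod_eq_sub_mul_div]
    exact congrArg (f.coeff v - ·) (mul_comm _ _)
  have hpdeg : p.natDegree ≤ v := by
    refine natDegree_sub_le_of_le hfv ?_ |>.trans (max_self v).le
    refine (natDegree_C_mul_le _ _).trans (natDegree_mul_le.trans ?_)
    rw [hB.natDegree_eq k hk, natDegree_X_pow]
    omega
  rw [← EuclideanDomain.mod_eq_zero]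
  by_contra hr
  have hpdeg' : p.natDegree = v := le_antisymm hpdeg (le_natDegree_of_ne_zero (hpv ▸ hr))
  have hp0 : p ≠ 0 := fun h => hr (by rw [← hpv, h, coeff_zero])
  have hM : M ≠ 0 := (hB.monic_leadingCoeff k hk).ne_zero
  have hlow : (f.coeff v % M).natDegree < m k := by
    rw [← hB.natDegree_leadingCoeff k hk]
    exact natDegree_lt_natDegree hr (EuclideanDomain.mod_lt _ hM)
  have hmk := hB.m_le_natDegree_leadingCoeff hp hp0 hk (by rwa [hpdeg'])
  rw [leadingCoeff, hpdeg', hpv] at hmk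
  omega

theorem leadingCoeff_dvd_leadingCoeff (hB : IsLexGroebnerStaircase I s m n g) {i k : ℕ}
    (hik : i ≤ k) (hk : k ≤ s) : (g i).leadingCoeff ∣ (g k).leadingCoeff := by
  have hi : i ≤ s := hik.trans hk
  have hnk : n k ≤ n i := hB.strictAntiOn_n.antitoneOn hi hk hik
  have h := hB.leadingCoeff_dvd_coeff_of_mem hi le_rfl
    (fun j hj => hB.strictAntiOn_n (Set.mem_Iic.2 (hj.le.trans hi)) hi hj)
    (I.mul_mem_right (X ^ (n i - n k)) (hB.mem k hk)) (natDegree_mul_le.trans ?_)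
  · rwa [coeff_mul_X_pow', if_pos (Nat.sub_le _ _), Nat.sub_sub_self hnk,
      ← hB.natDegree_eq k hk] at h
  · rw [hB.natDegree_eq k hk, natDegree_X_pow]
    omega

/-- With `k` the first index such that `n k ≤ v`: scaling `g i` by `Q = lc(g k) / lc(g i)` and
reducing it modulo `g k = lc(g k) * (monic)` to `y`-degree `v` changes its coefficient of `y ^ v`
only by multiples of `lc(g k)`, which divides the result; cancelling `Q` leaves
`lc(g i) ∣ coeff v (g i)`. -/
theorem leadingCoeff_dvd_coeff_of_forall_gt (hB : IsLexGroebnerStaircase I s m n g) {i : ℕ}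
    (hi : i ≤ s) (hlater : ∀ k > i, k ≤ s → ∀ w, (g k).leadingCoeff ∣ (g k).coeff w) (v : ℕ)
    (habove : ∀ w > v, (g i).leadingCoeff ∣ (g i).coeff w) :
    (g i).leadingCoeff ∣ (g i).coeff v := by
  rcases lt_or_ge v (n i) with hv | hv
  swap
  · rcases hv.eq_or_lt with rfl | hv
    · rw [← hB.natDegree_eq i hi]; rfl
    · rw [coeff_eq_zero_of_natDegree_lt (by rwa [hB.natDegree_eq i hi])]
      exact dvd_zero _
  have hex : ∃ k, k ≤ s ∧ n k ≤ v := ⟨s, le_rfl, by rw [hB.n_last]; exact Nat.zero_le v⟩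
  obtain ⟨hks, hkv⟩ := Nat.find_spec hex
  have hlt : ∀ j < Nat.find hex, v < n j := fun j hj =>
    not_le.1 fun h => Nat.find_min hex hj ⟨(hj.trans_le hks).le, h⟩
  set k := Nat.find hex
  have hik : i < k := not_le.1 fun h =>
    (hB.strictAntiOn_n.antitoneOn hks hi h).not_gt (hkv.trans_lt hv)
  have hgk0 : g k ≠ 0 := leadingCoeff_ne_zero.1 (hB.monic_leadingCoeff k hks).ne_zero
  obtain ⟨G, hGmon, hGdeg, hgk⟩ := exists_monic_of_leadingCoeff_dvd_coeff hgk0 (hlater k hik hks)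
  obtain ⟨Q, hQ⟩ := hB.leadingCoeff_dvd_leadingCoeff hik.le hks
  have hQ0 : Q ≠ 0 := by
    rintro rfl
    exact (hB.monic_leadingCoeff k hks).ne_zero (by rw [hQ, mul_zero])
  obtain ⟨q, hq⟩ := exists_natDegree_sub_mul_C_mul_le (L := (g k).leadingCoeff) (v := v) hGmon
    (by rw [hGdeg, hB.natDegree_eq k hks]; exact hkv) (C Q * g i) fun w hw => by
      rw [coeff_C_mul, hQ, mul_comm _ Q]
      exact mul_dvd_mul_left Q (habove w hw)
  rw [← hgk] at hq
  have hred := hB.leadingCoeff_dvd_coeff_of_mem hks hkv hlt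
    (I.sub_mem (I.mul_mem_left _ (hB.mem i hi)) (I.mul_mem_left q (hB.mem k hks))) hq
  have hgk_dvd : (g k).leadingCoeff ∣ (q * g k).coeff v :=
    (C_dvd_iff_dvd_coeff _ _).1 (dvd_mul_of_dvd_right ⟨G, hgk⟩ q) v
  have hQc := dvd_add hred hgk_dvd
  rw [coeff_sub, sub_add_cancel, coeff_C_mul, hQ, mul_comm _ Q] at hQc
  exact (mul_dvd_mul_iff_left hQ0).1 hQc

theorem leadingCoeff_dvd_coeff (hB : IsLexGroebnerStaircase I s m n g) {i : ℕ} (hi : i ≤ s)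
    (v : ℕ) : (g i).leadingCoeff ∣ (g i).coeff v := by
  induction i using Nat.strong_decreasing_induction generalizing v with
  | base => exact ⟨s, fun k hk hks => absurd hks (not_le.2 hk)⟩
  | step i ih =>
    induction v using Nat.strong_decreasing_induction with
    | base =>
      refine ⟨n i, fun w hw => ?_⟩
      rw [coeff_eq_zero_of_natDegree_lt (by rwa [hB.natDegree_eq i hi])]
      exact dvd_zero _
    | step v ihv =>
      exact hB.leadingCoeff_dvd_coeff_of_forall_gt hi (fun k hik hks => ih k hik hks) v ihv

theorem exists_eq_C_leadingCoeff_mul_monic (hB : IsLexGroebnerStaircase I s m n g) {i : ℕ}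
    (hi : i ≤ s) :
    ∃ G : K[X][X], G.Monic ∧ G.natDegree = n i ∧ g i = C (g i).leadingCoeff * G := by
  rw [← hB.natDegree_eq i hi]
  exact exists_monic_of_leadingCoeff_dvd_coeff
    (leadingCoeff_ne_zero.1 (hB.monic_leadingCoeff i hi).ne_zero) (hB.leadingCoeff_dvd_coeff hi)

end IsLexGroebnerStaircase

theorem stmt10_general {K : Type*} [Field K] (s : ℕ) (m n : ℕ → ℕ)
    (I : Ideal (Polynomial (Polynomial K))) (g : ℕ → Polynomial (Polynomial K))
    (hm0 : m 0 = 0) (hns : n s = 0)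
    (hm : ∀ i < s, m i < m (i + 1)) (hn : ∀ i < s, n (i + 1) < n i)
    (hmem : ∀ i ≤ s, g i ∈ I)
    (hdeg : ∀ i ≤ s, (g i).natDegree = n i)
    (hlc : ∀ i ≤ s, (g i).leadingCoeff.Monic ∧ (g i).leadingCoeff.natDegree = m i)
    (hGB : ∀ f ∈ I, f ≠ 0 → ∃ i ≤ s, m i ≤ f.leadingCoeff.natDegree ∧ n i ≤ f.natDegree) :
    ∃ D : ℕ → Polynomial K,
      (∀ i, 1 ≤ i → i ≤ s → (D i).Monic ∧ (D i).natDegree = m i - m (i - 1)) ∧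
      (∀ i ≤ s, ∃ G : Polynomial (Polynomial K), G.Monic ∧ G.natDegree = n i ∧
        g i = Polynomial.C (∏ j ∈ Finset.Icc 1 i, D j) * G) ∧
      g s = Polynomial.C (∏ j ∈ Finset.Icc 1 s, D j) ∧
      (∀ i ≤ s, (g i).coeff (n i) = ∏ j ∈ Finset.Icc 1 i, D j) := by
  have hB : IsLexGroebnerStaircase I s m n g :=
    { strictMonoOn_m := strictMonoOn_Iic_of_lt_succ hm
      strictAntiOn_n := strictAntiOn_Iic_of_succ_lt hn
      n_last := hns
      mem := hmem
      natDegree_eq := hdeg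
      monic_leadingCoeff := fun i hi => (hlc i hi).1
      natDegree_leadingCoeff := fun i hi => (hlc i hi).2
      exists_le := hGB }
  have hM0 : (g 0).leadingCoeff = 1 :=
    (hlc 0 s.zero_le).1.natDegree_eq_zero.1 (by rw [(hlc 0 s.zero_le).2, hm0])
  obtain ⟨D, hD, hprod⟩ := exists_monic_prod_Icc_eq (M := fun i => (g i).leadingCoeff) hM0
    (fun i hi => (hlc i hi).1) (fun i hi => hB.leadingCoeff_dvd_leadingCoeff i.le_succ hi)
  refine ⟨D, fun i h1 hi => ?_, fun i hi => ?_, ?_, fun i hi => ?_⟩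
  · rw [(hD i h1 hi).2, (hlc i hi).2, (hlc (i - 1) (by omega)).2]
    exact ⟨(hD i h1 hi).1, rfl⟩
  · rw [hprod i hi]
    exact hB.exists_eq_C_leadingCoeff_mul_monic hi
  · obtain ⟨G, hG, hGdeg, hgs⟩ := hB.exists_eq_C_leadingCoeff_mul_monic le_rfl
    rw [hprod s le_rfl]
    exact hgs.trans (by rw [hG.natDegree_eq_zero.1 (hGdeg.trans hns), mul_one])
  · rw [hprod i hi, ← hdeg i hi]
    rfl

/-- Lazard's structure theorem. We represent `K[x,y]` as `K[x][y] = Polynomial (Polynomial K)`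
(with `y` the outer variable); under the lexicographic order `y ≻ x`, the initial monomial
of a nonzero `f` is `x^(f.leadingCoeff.natDegree) * y^(f.natDegree)`.  If `g 0, ..., g s`
is the minimal reduced lex Gröbner basis of a zero-dimensional ideal `I`, with initial
terms `x^(m i) y^(n i)`, then there are monic `D i ∈ K[x]` of degrees `m i - m (i-1)` such
that `g i = (D 1 ⋯ D i) * G i` with `G i` monic of degree `n i` in `y`; in particular
`g s = D 1 ⋯ D s ∈ K[x]` and the coefficient of `y^(n i)` in `g i` is `M i = D 1 ⋯ D i`. -/
theorem stmt10 {K : Type*} [Field K] (s : ℕ) (m n : ℕ → ℕ)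
    (I : Ideal (Polynomial (Polynomial K))) (g : ℕ → Polynomial (Polynomial K))
    (hm0 : m 0 = 0) (hns : n s = 0)
    (hm : ∀ i < s, m i < m (i + 1)) (hn : ∀ i < s, n (i + 1) < n i)
    (hfin : FiniteDimensional K (Polynomial (Polynomial K) ⧸ I))
    (hmem : ∀ i ≤ s, g i ∈ I)
    (hdeg : ∀ i ≤ s, (g i).natDegree = n i)
    (hlc : ∀ i ≤ s, (g i).leadingCoeff.Monic ∧ (g i).leadingCoeff.natDegree = m i)
    (hGB : ∀ f ∈ I, f ≠ 0 → ∃ i ≤ s, m i ≤ f.leadingCoeff.natDegree ∧ n i ≤ f.natDegree)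
    (hred : ∀ i ≤ s, ∀ j ≤ s, ∀ u v : ℕ, ((g i).coeff v).coeff u ≠ 0 →
      m j ≤ u → n j ≤ v → i = j ∧ u = m i ∧ v = n i) :
    ∃ D : ℕ → Polynomial K,
      (∀ i, 1 ≤ i → i ≤ s → (D i).Monic ∧ (D i).natDegree = m i - m (i - 1)) ∧
      (∀ i ≤ s, ∃ G : Polynomial (Polynomial K), G.Monic ∧ G.natDegree = n i ∧
        g i = Polynomial.C (∏ j ∈ Finset.Icc 1 i, D j) * G) ∧
      g s = Polynomial.C (∏ j ∈ Finset.Icc 1 s, D j) ∧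
      (∀ i ≤ s, (g i).coeff (n i) = ∏ j ∈ Finset.Icc 1 i, D j) :=
  stmt10_general s m n I g hm0 hns hm hn hmem hdeg hlc hGB
end

section
/- Let H = (h₀,...,h_s) be a minimal lexicographic Gröbner basis (y ≻ x) of a zero-dimensional ideal I, with h_i having initial term x^{m_i} y^{n_i}, and let g be an element of I such that r := h_i − g has deg_y r < n_i. Reduce r successively by h_{i+1}, then h_{i+2}, ..., then h_s, and for j = i,...,s let R_j be the intermediate remainder after reducing by h_{i+1},...,h_j. Then deg_y R_j < n_j for all j; in particular R_s = 0 and there exist quotients q_{j} with deg_y q_j < n_{j-1} − n_j such that h_i − g = Σ_{j=i+1}^{s} q_j h_j. -/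
open Polynomial

namespace Stmt15Aux

variable {K : Type*} [Field K]

lemma anti_n (s : ℕ) (n : ℕ → ℕ) (hn : ∀ i < s, n (i + 1) < n i) :
    ∀ a b, a ≤ b → b ≤ s → n b ≤ n a := by
  intro a b hab
  induction b with
  | zero => intro _; interval_cases a; exact le_refl _
  | succ b ih =>
    intro hbs
    rcases Nat.lt_or_ge a (b + 1) with hlt | hge
    · have h1 := ih (by omega) (by omega)
      have h2 := hn b (by omega)
      omega
    · have : a = b + 1 := by omega
      subst this; exact le_refl _

lemma mono_m (s : ℕ) (m : ℕ → ℕ) (hm : ∀ i < s, m i < m (i + 1)) :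
    ∀ a b, a ≤ b → b ≤ s → m a ≤ m b := by
  intro a b hab
  induction b with
  | zero => intro _; interval_cases a; exact le_refl _
  | succ b ih =>
    intro hbs
    rcases Nat.lt_or_ge a (b + 1) with hlt | hge
    · have h1 := ih (by omega) (by omega)
      have h2 := hm b (by omega)
      omega
    · have : a = b + 1 := by omega
      subst this; exact le_refl _

/-- Inner reduction: kill the top `y`-coefficient of `f` (of `y`-degree exactly `b`)
by subtracting a multiple of `h'`, lowering the `y`-degree below `b`. -/
lemma reduce_top (I : Ideal (Polynomial (Polynomial K)))
    (h' : Polynomial (Polynomial K)) (n' m' : ℕ)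
    (hmem' : h' ∈ I) (hdeg' : h'.natDegree = n')
    (hlc' : h'.leadingCoeff.Monic) (hlcdeg' : h'.leadingCoeff.natDegree = m')
    (b : ℕ) (hb : n' ≤ b)
    (hGB' : ∀ f ∈ I, f.degree = (b : WithBot ℕ) → m' ≤ f.leadingCoeff.natDegree) :
    ∀ a : ℕ, ∀ f ∈ I, f.degree = (b : WithBot ℕ) → f.leadingCoeff.natDegree ≤ a →
      ∃ q₀ : Polynomial (Polynomial K), q₀.degree ≤ ((b - n' : ℕ) : WithBot ℕ) ∧
        (f - q₀ * h').degree < (b : WithBot ℕ) ∧ f - q₀ * h' ∈ I := by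
  intro a
  induction a using Nat.strong_induction_on with
  | _ a IH =>
  intro f hfI hfd hfa
  have hf0 : f ≠ 0 := by
    intro h0; rw [h0, degree_zero] at hfd; exact absurd hfd (by simp)
  have hh0 : h' ≠ 0 := leadingCoeff_ne_zero.mp hlc'.ne_zero
  have hnatf : f.natDegree = b := natDegree_eq_of_degree_eq_some hfd
  set p : Polynomial K := f.leadingCoeff with hp
  have hp0 : p ≠ 0 := leadingCoeff_ne_zero.mpr hf0
  set a' : ℕ := p.natDegree with ha'
  have hm'a : m' ≤ a' := hGB' f hfI hfd
  set c : K := p.leadingCoeff with hc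
  have hc0 : c ≠ 0 := leadingCoeff_ne_zero.mpr hp0
  set u : Polynomial K := Polynomial.C c * Polynomial.X ^ (a' - m') with hu
  set q₀ : Polynomial (Polynomial K) := Polynomial.C u * Polynomial.X ^ (b - n') with hq₀
  have hq₀deg : q₀.degree ≤ ((b - n' : ℕ) : WithBot ℕ) := by
    calc q₀.degree ≤ (Polynomial.C u).degree + (Polynomial.X ^ (b - n') : Polynomial (Polynomial K)).degree :=
          degree_mul_le _ _
      _ ≤ 0 + ((b - n' : ℕ) : WithBot ℕ) := by
          gcongr
          · exact degree_C_le
          · exact degree_X_pow_le _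
      _ = ((b - n' : ℕ) : WithBot ℕ) := by rw [zero_add]
  have hqhdeg : (q₀ * h').degree ≤ (b : WithBot ℕ) := by
    calc (q₀ * h').degree ≤ q₀.degree + h'.degree := degree_mul_le _ _
      _ ≤ ((b - n' : ℕ) : WithBot ℕ) + ((n' : ℕ) : WithBot ℕ) := by
          gcongr
          exact (degree_le_natDegree).trans (by rw [hdeg'])
      _ = (b : WithBot ℕ) := by
          rw [← Nat.cast_add]
          congr 1
          omega
  have hcoeffqh : (q₀ * h').coeff b = u * h'.leadingCoeff := by
    have : q₀ * h' = Polynomial.C u * (h' * Polynomial.X ^ (b - n')) := by ring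
    rw [this, coeff_C_mul, coeff_mul_X_pow', if_pos (by omega)]
    congr 1
    have : b - (b - n') = n' := by omega
    rw [this, ← hdeg', coeff_natDegree]
  set f₁ : Polynomial (Polynomial K) := f - q₀ * h' with hf₁
  have hf₁I : f₁ ∈ I := I.sub_mem hfI (I.mul_mem_left q₀ hmem')
  have hf₁deg : f₁.degree ≤ (b : WithBot ℕ) := by
    refine (degree_sub_le _ _).trans ?_
    rw [max_le_iff]
    exact ⟨le_of_eq hfd, hqhdeg⟩
  -- the top coefficient strictly drops in x-degree
  have hvdeg : (u * h'.leadingCoeff).degree = ((a' : ℕ) : WithBot ℕ) := by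
    rw [degree_mul, hu, degree_C_mul_X_pow _ hc0, degree_eq_natDegree hlc'.ne_zero, hlcdeg',
      ← Nat.cast_add]
    congr 1
    omega
  have hvlc : (u * h'.leadingCoeff).leadingCoeff = c := by
    rw [leadingCoeff_mul, hlc'.leadingCoeff, mul_one, hu]
    rw [leadingCoeff_C_mul_X_pow]
  have hpdeg : p.degree = ((a' : ℕ) : WithBot ℕ) := degree_eq_natDegree hp0
  have hsub : (p - u * h'.leadingCoeff).degree < ((a' : ℕ) : WithBot ℕ) := by
    have := degree_sub_lt (hpdeg.trans hvdeg.symm) hp0 (by rw [hvlc])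
    rwa [hpdeg] at this
  have hcoeff₁ : f₁.coeff b = p - u * h'.leadingCoeff := by
    rw [hf₁, coeff_sub, hcoeffqh, hp, ← hnatf, coeff_natDegree]
  rcases lt_or_eq_of_le hf₁deg with hlt | heq
  · exact ⟨q₀, hq₀deg, hlt, hf₁I⟩
  · have hf₁0 : f₁ ≠ 0 := by
      intro h0; rw [h0, degree_zero] at heq; exact absurd heq.symm (by simp)
    have hnat₁ : f₁.natDegree = b := natDegree_eq_of_degree_eq_some heq
    have hlc₁ : f₁.leadingCoeff = p - u * h'.leadingCoeff := by
      rw [← hcoeff₁, ← hnat₁]; rfl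
    have hlc₁0 : f₁.leadingCoeff ≠ 0 := leadingCoeff_ne_zero.mpr hf₁0
    have hlt' : f₁.leadingCoeff.natDegree < a' := by
      have h2 := hsub
      rw [← hlc₁] at h2
      exact (natDegree_lt_iff_degree_lt hlc₁0).mpr h2
    obtain ⟨q₁, hq₁deg, hq₁lt, hq₁I⟩ :=
      IH f₁.leadingCoeff.natDegree (lt_of_lt_of_le hlt' hfa) f₁ hf₁I heq rfl.le
    have hre : f - (q₀ + q₁) * h' = f₁ - q₁ * h' := by rw [hf₁]; ring
    refine ⟨q₀ + q₁, ?_, ?_, ?_⟩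
    · refine (degree_add_le _ _).trans ?_
      rw [max_le_iff]
      exact ⟨hq₀deg, hq₁deg⟩
    · rwa [hre]
    · rwa [hre]


/-- Outer reduction: reduce `f ∈ I` of `y`-degree `< n_i` by `h'` until its `y`-degree
drops below `n'`. -/
lemma div_step (I : Ideal (Polynomial (Polynomial K)))
    (h' : Polynomial (Polynomial K)) (n' m' : ℕ)
    (hmem' : h' ∈ I) (hdeg' : h'.natDegree = n')
    (hlc' : h'.leadingCoeff.Monic) (hlcdeg' : h'.leadingCoeff.natDegree = m')
    (ni : ℕ) (hni : n' < ni)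
    (hGB'' : ∀ f ∈ I, f ≠ 0 → f.natDegree < ni → n' ≤ f.natDegree →
      m' ≤ f.leadingCoeff.natDegree) :
    ∀ b : ℕ, ∀ f ∈ I, f.degree < (ni : WithBot ℕ) → f.degree < (b : WithBot ℕ) →
      ∃ q f' : Polynomial (Polynomial K),
        q.degree < ((ni - n' : ℕ) : WithBot ℕ) ∧ f'.degree < (n' : WithBot ℕ) ∧
        f' ∈ I ∧ f = q * h' + f' := by
  intro b
  induction b with
  | zero =>
    intro f hfI _ hfb
    have hf0 : f = 0 := by
      rw [← degree_eq_bot, ← Nat.WithBot.lt_zero_iff]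
      exact_mod_cast hfb
    subst hf0
    refine ⟨0, 0, ?_, ?_, I.zero_mem, by simp⟩ <;>
      · rw [degree_zero]
        exact_mod_cast WithBot.bot_lt_coe _
  | succ b ihb =>
    intro f hfI hfni hfb
    by_cases hsmall : f.degree < (n' : WithBot ℕ)
    · refine ⟨0, f, ?_, hsmall, hfI, by simp⟩
      rw [degree_zero]
      exact_mod_cast WithBot.bot_lt_coe _
    · push_neg at hsmall
      have hf0 : f ≠ 0 := by
        intro h0
        rw [h0, degree_zero] at hsmall
        exact absurd hsmall (by simp [WithBot.bot_lt_coe])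
      set b' : ℕ := f.natDegree with hb'
      have hfd : f.degree = (b' : WithBot ℕ) := degree_eq_natDegree hf0
      have hn'b' : n' ≤ b' := by
        rw [hfd] at hsmall
        exact_mod_cast hsmall
      have hb'ni : b' < ni := by
        rw [hfd] at hfni
        exact_mod_cast hfni
      have hb'b : b' ≤ b := by
        rw [hfd] at hfb
        have : (b' : WithBot ℕ) < ((b + 1 : ℕ) : WithBot ℕ) := by exact_mod_cast hfb
        have := Nat.cast_lt.mp this
        omega
      have hGB' : ∀ f₁ ∈ I, f₁.degree = (b' : WithBot ℕ) → m' ≤ f₁.leadingCoeff.natDegree := by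
        intro f₁ hf₁I hf₁d
        have hf₁0 : f₁ ≠ 0 := by
          intro h0; rw [h0, degree_zero] at hf₁d; exact absurd hf₁d (by simp)
        have : f₁.natDegree = b' := natDegree_eq_of_degree_eq_some hf₁d
        exact hGB'' f₁ hf₁I hf₁0 (by omega) (by omega)
      obtain ⟨q₀, hq₀deg, hq₀lt, hq₀I⟩ :=
        reduce_top I h' n' m' hmem' hdeg' hlc' hlcdeg' b' hn'b' hGB'
          f.leadingCoeff.natDegree f hfI hfd rfl.le
      have hd1 : (f - q₀ * h').degree < (ni : WithBot ℕ) :=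
        hq₀lt.trans_le (by exact_mod_cast Nat.cast_le.mpr hb'ni.le)
      have hd2 : (f - q₀ * h').degree < (b : WithBot ℕ) :=
        hq₀lt.trans_le (by exact_mod_cast Nat.cast_le.mpr hb'b)
      obtain ⟨q₁, f', hq₁deg, hf'deg, hf'I, hfeq⟩ := ihb (f - q₀ * h') hq₀I hd1 hd2
      refine ⟨q₀ + q₁, f', ?_, hf'deg, hf'I, ?_⟩
      · refine (degree_add_le _ _).trans_lt ?_
        rw [max_lt_iff]
        constructor
        · refine hq₀deg.trans_lt ?_
          exact_mod_cast Nat.cast_lt.mpr (by omega : b' - n' < ni - n')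
        · exact hq₁deg
      · have : f - q₀ * h' = q₁ * h' + f' := hfeq
        rw [add_mul]
        linear_combination this

lemma main (s : ℕ) (m n : ℕ → ℕ) (I : Ideal (Polynomial (Polynomial K)))
    (h : ℕ → Polynomial (Polynomial K)) (hns : n s = 0)
    (hm : ∀ i < s, m i < m (i + 1)) (hn : ∀ i < s, n (i + 1) < n i)
    (hmem : ∀ j ≤ s, h j ∈ I) (hdeg : ∀ j ≤ s, (h j).natDegree = n j)
    (hlc : ∀ j ≤ s, (h j).leadingCoeff.Monic ∧ (h j).leadingCoeff.natDegree = m j)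
    (hGB : ∀ f ∈ I, f ≠ 0 → ∃ j ≤ s, m j ≤ f.leadingCoeff.natDegree ∧ n j ≤ f.natDegree) :
    ∀ d i, i ≤ s → s - i ≤ d → ∀ f ∈ I, f.degree < (n i : WithBot ℕ) →
      ∃ q : ℕ → Polynomial (Polynomial K),
        (∀ j, i + 1 ≤ j → j ≤ s → (q j).degree < ((n (j - 1) - n j : ℕ) : WithBot ℕ)) ∧
        (∀ j, i ≤ j → j ≤ s →
          (f - ∑ k ∈ Finset.Icc (i + 1) j, q k * h k).degree < (n j : WithBot ℕ)) ∧
        f = ∑ j ∈ Finset.Icc (i + 1) s, q j * h j := by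
  have base : ∀ f ∈ I, f.degree < (n s : WithBot ℕ) →
      ∃ q : ℕ → Polynomial (Polynomial K),
        (∀ j, s + 1 ≤ j → j ≤ s → (q j).degree < ((n (j - 1) - n j : ℕ) : WithBot ℕ)) ∧
        (∀ j, s ≤ j → j ≤ s →
          (f - ∑ k ∈ Finset.Icc (s + 1) j, q k * h k).degree < (n j : WithBot ℕ)) ∧
        f = ∑ j ∈ Finset.Icc (s + 1) s, q j * h j := by
    intro f hfI hfd
    have hf0 : f = 0 := by
      rw [hns] at hfd
      rw [← degree_eq_bot, ← Nat.WithBot.lt_zero_iff]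
      exact_mod_cast hfd
    refine ⟨fun _ => 0, ?_, ?_, ?_⟩
    · intro j h1 h2
      exact absurd h2 (by omega)
    · intro j h1 h2
      have : j = s := by omega
      subst this
      rw [Finset.Icc_eq_empty (by omega), Finset.sum_empty, sub_zero]
      exact hfd
    · rw [Finset.Icc_eq_empty (by omega), Finset.sum_empty]
      exact hf0
  intro d
  induction d with
  | zero =>
    intro i his hd f hfI hfd
    have : i = s := by omega
    subst this
    exact base f hfI hfd
  | succ d IH =>
    intro i his hd f hfI hfd
    by_cases hcase : i = s
    · subst hcase
      exact base f hfI hfd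
    · have his' : i < s := lt_of_le_of_ne his hcase
      have hmono_n := anti_n s n hn
      have hmono_m := mono_m s m hm
      have hGB'' : ∀ f₁ ∈ I, f₁ ≠ 0 → f₁.natDegree < n i → n (i + 1) ≤ f₁.natDegree →
          m (i + 1) ≤ f₁.leadingCoeff.natDegree := by
        intro f₁ h1 h2 h3 h4
        obtain ⟨j, hjs, hmj, hnj⟩ := hGB f₁ h1 h2
        have hij : i + 1 ≤ j := by
          by_contra hc
          have := hmono_n j i (by omega) his
          omega
        exact le_trans (hmono_m (i + 1) j hij hjs) hmj
      obtain ⟨q₀, f', hq₀, hf'deg, hf'I, hfeq⟩ :=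
        div_step I (h (i + 1)) (n (i + 1)) (m (i + 1)) (hmem (i + 1) (by omega))
          (hdeg (i + 1) (by omega)) (hlc (i + 1) (by omega)).1 (hlc (i + 1) (by omega)).2
          (n i) (hn i his') hGB'' (f.natDegree + 1) f hfI hfd
          (lt_of_le_of_lt degree_le_natDegree (by exact_mod_cast Nat.lt_succ_self _))
      obtain ⟨q', hq'1, hq'2, hq'3⟩ := IH (i + 1) (by omega) (by omega) f' hf'I hf'deg
      have hsplit : ∀ j, i + 1 ≤ j →
          ∑ k ∈ Finset.Icc (i + 1) j, (if k = i + 1 then q₀ else q' k) * h k =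
            q₀ * h (i + 1) + ∑ k ∈ Finset.Icc (i + 2) j, q' k * h k := by
        intro j hj
        have hins : Finset.Icc (i + 1) j = insert (i + 1) (Finset.Icc (i + 2) j) := by
          ext x
          simp only [Finset.mem_Icc, Finset.mem_insert]
          omega
        rw [hins, Finset.sum_insert (by simp only [Finset.mem_Icc]; omega), if_pos rfl]
        congr 1
        refine Finset.sum_congr rfl ?_
        intro k hk
        simp only [Finset.mem_Icc] at hk
        rw [if_neg (by omega)]
      refine ⟨fun j => if j = i + 1 then q₀ else q' j, ?_, ?_, ?_⟩
      · intro j h1 h2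
        rcases eq_or_lt_of_le h1 with he | hlt
        · subst he
          simpa only [if_pos rfl, ↓reduceIte, Nat.add_sub_cancel] using hq₀
        · have hne : ¬ j = i + 1 := by omega
          simpa only [if_neg hne] using hq'1 j (by omega) h2
      · intro j h1 h2
        rcases eq_or_lt_of_le h1 with he | hlt
        · subst he
          rw [Finset.Icc_eq_empty (by omega), Finset.sum_empty, sub_zero]
          exact hfd
        · rw [hsplit j (by omega)]
          have hre : f - (q₀ * h (i + 1) + ∑ k ∈ Finset.Icc (i + 2) j, q' k * h k) =
              f' - ∑ k ∈ Finset.Icc (i + 2) j, q' k * h k := by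
            rw [hfeq]; ring
          rw [hre]
          exact hq'2 j (by omega) h2
      · rw [hsplit s (by omega), ← hq'3]
        exact hfeq

end Stmt15Aux

/-- Reduction of `h i - g` by the tail `h (i+1), ..., h s` of a minimal lex Gröbner basis
(in `K[x][y]`, `y` outer, lex order `y ≻ x`): if `g ∈ I` and `deg_y (h i - g) < n i`, then
there are quotients `q j` with `deg_y (q j) < n (j-1) - n j` such that every intermediate
remainder `h i - g - ∑_{k=i+1}^{j} q k * h k` has `y`-degree `< n j`, and
`h i - g = ∑_{j=i+1}^{s} q j * h j`. -/
theorem stmt15 {K : Type*} [Field K] (s : ℕ) (m n : ℕ → ℕ)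
    (I : Ideal (Polynomial (Polynomial K))) (h : ℕ → Polynomial (Polynomial K))
    (hm0 : m 0 = 0) (hns : n s = 0)
    (hm : ∀ i < s, m i < m (i + 1)) (hn : ∀ i < s, n (i + 1) < n i)
    (hmem : ∀ j ≤ s, h j ∈ I) (hdeg : ∀ j ≤ s, (h j).natDegree = n j)
    (hlc : ∀ j ≤ s, (h j).leadingCoeff.Monic ∧ (h j).leadingCoeff.natDegree = m j)
    (hGB : ∀ f ∈ I, f ≠ 0 → ∃ j ≤ s, m j ≤ f.leadingCoeff.natDegree ∧ n j ≤ f.natDegree)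
    (i : ℕ) (hi : i ≤ s) (g : Polynomial (Polynomial K)) (hg : g ∈ I)
    (hr : (h i - g).degree < (n i : WithBot ℕ)) :
    ∃ q : ℕ → Polynomial (Polynomial K),
      (∀ j, i + 1 ≤ j → j ≤ s → (q j).degree < ((n (j - 1) - n j : ℕ) : WithBot ℕ)) ∧
      (∀ j, i ≤ j → j ≤ s →
        (h i - g - ∑ k ∈ Finset.Icc (i + 1) j, q k * h k).degree < (n j : WithBot ℕ)) ∧
      h i - g = ∑ j ∈ Finset.Icc (i + 1) s, q j * h j :=
  Stmt15Aux.main s m n I h hns hm hn hmem hdeg hlc hGB (s - i) i hi le_rfl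
    (h i - g) (I.sub_mem (hmem i hi) hg) hr
end

section
/- Let E = (y^{n₀}, x^{m₁}y^{n₁}, ..., x^{m_s}) be staircase monomials with associated d_i, e_i, let σ_{j,i} (0 ≤ i ≤ s−1, i ≤ j ≤ s) be polynomials in K[x,y] satisfying deg_x σ_{j,i} < d_{i+1}, σ_{i,i} ∈ K[x], deg_y σ_{j,i} < e_j for j > i, and define h_s = (x^{d₁}−σ_{0,0})···(x^{d_s}−σ_{s−1,s−1}) and, descending, x^{d_{i+1}} h_i − y^{e_{i+1}} h_{i+1} = Σ_{j=i}^{s} σ_{j,i} h_j. Then for each i, h_i has initial term x^{m_i} y^{n_i} under the lexicographic order y ≻ x, deg_x h_i ≤ m_s with equality only for i = s, and (x^{d₁}−σ_{0,0})···(x^{d_i}−σ_{i−1,i−1}) divides h_i and equals the polynomial coefficient of y^{n_i} in h_i. -/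
/-!
Descending induction on `i`. Rewritten as
`(x^(d (i+1)) - σ i i) h i = y^(e (i+1)) h (i+1) + ∑_{j > i} σ j i h j`,
the recursion has a tail whose `y`-degree is below `n i`, because `deg_y σ j i < e j`
and the `n j` decrease. So the top `y`-coefficient of `h i` comes from `y^(e (i+1)) h (i+1)`
alone, and cancelling the monic factor `x^(d (i+1)) - σ i i` (a non-zero-divisor) yields the
leading coefficient and the divisibility. Since `deg_x σ j i < d (i+1)`, multiplying by that factor
raises the `x`-degree by exactly `d (i+1)`, which keeps `deg_x h i` strictly below `m s`.
-/

open Polynomial Finset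

theorem Nat.decreasing_induction_Ioc {P : ℕ → Prop} {s : ℕ} (top : P s)
    (step : ∀ i < s, (∀ j ∈ Ioc i s, P j) → P i) : ∀ i ≤ s, P i := by
  intro i
  induction i using Nat.strong_decreasing_induction with
  | base => exact ⟨s, fun i hi his ↦ absurd his (by omega)⟩
  | step i ih =>
    intro his
    rcases his.eq_or_lt with rfl | hi
    · exact top
    · exact step i hi fun j hj ↦ ih j (mem_Ioc.mp hj).1 (mem_Ioc.mp hj).2

section CoefficientDegrees

variable {R : Type*} [CommRing R]

theorem natDegree_le_sub_one_of_degree_lt {p : R[X]} {a : ℕ} (hp : p.degree < a) :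
    p.natDegree ≤ a - 1 :=
  natDegree_le_pred (natDegree_le_of_degree_le hp.le) (coeff_eq_zero_of_degree_lt hp)

theorem degree_mul_lt_of_degree_lt {p : R[X]} {a : ℕ} (hp : p.degree < a) (q : R[X]) :
    (p * q).degree < ↑(a + q.natDegree) := by
  rcases eq_or_ne p 0 with rfl | hp0
  · simp
  refine (degree_mul_le_of_le degree_le_natDegree degree_le_natDegree).trans_lt ?_
  have : p.natDegree < a := (natDegree_lt_iff_degree_lt hp0).mpr hp
  exact_mod_cast (by omega : p.natDegree + q.natDegree < a + q.natDegree)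

theorem natDegree_coeff_mul_le {p q : R[X][X]} {a b : ℕ}
    (hp : ∀ v, (p.coeff v).natDegree ≤ a) (hq : ∀ v, (q.coeff v).natDegree ≤ b) (v : ℕ) :
    ((p * q).coeff v).natDegree ≤ a + b := by
  rw [coeff_mul]
  exact natDegree_sum_le_of_forall_le _ _ fun _ _ ↦
    natDegree_mul_le.trans (add_le_add (hp _) (hq _))

theorem natDegree_coeff_lt_of_C_mul_eq {f : R[X]} (hf : f.Monic) (hd : 0 < f.natDegree)
    {h g S : R[X][X]} {e b : ℕ} (hb : 0 < b) (hg : ∀ v, (g.coeff v).natDegree ≤ b)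
    (hS : ∀ v, (S.coeff v).natDegree ≤ f.natDegree - 1 + b)
    (heq : C f * h = X ^ e * g + S) (v : ℕ) :
    (h.coeff v).natDegree < b := by
  rcases eq_or_ne (h.coeff v) 0 with h0 | h0
  · rwa [h0, natDegree_zero]
  have hXg : ((X ^ e * g).coeff v).natDegree ≤ b := by
    rw [coeff_X_pow_mul']
    split_ifs
    exacts [hg _, by simp]
  have hcoeff : f * h.coeff v = (X ^ e * g).coeff v + S.coeff v := by
    rw [← coeff_C_mul, heq, coeff_add]
  have hbound : (f * h.coeff v).natDegree ≤ f.natDegree - 1 + b := by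
    rw [hcoeff]
    exact (natDegree_add_le _ _).trans (max_le (hXg.trans (by omega)) (hS v))
  rw [hf.natDegree_mul' h0] at hbound
  omega

end CoefficientDegrees

section LeadingTerm

variable {R : Type*} [CommRing R] [IsDomain R]

theorem natDegree_eq_and_leadingCoeff_of_C_mul_eq {f : R} (hf : f ≠ 0) {h g S : R[X]} {e : ℕ}
    (hg : g ≠ 0) (hS : S.degree < ↑(e + g.natDegree)) (heq : C f * h = X ^ e * g + S) :
    h.natDegree = e + g.natDegree ∧ f * h.leadingCoeff = g.leadingCoeff := by
  have hlt : S.degree < (X ^ e * g).degree := by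
    rwa [mul_comm, degree_mul_X_pow, degree_eq_natDegree hg, add_comm, ← Nat.cast_add]
  constructor
  · rw [← natDegree_C_mul hf, heq, natDegree_add_eq_left_of_degree_lt hlt, mul_comm,
      natDegree_mul_X_pow e hg, add_comm]
  · rw [← leadingCoeff_C f, ← leadingCoeff_mul, heq, leadingCoeff_add_of_degree_lt' hlt,
      mul_comm, leadingCoeff_mul_X_pow]

end LeadingTerm

section StairShape

variable {R : Type*} [CommRing R]

/-- Read `R[X][X]` as `R[x][y]`, with `y` the outer variable. For monic `M` the first two fields say
that the lex initial term (`y ≻ x`) of `p` is `x^(deg M) y^ν`; `b` bounds the `x`-degree. -/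
structure StairShape (p : R[X][X]) (M : R[X]) (ν b : ℕ) : Prop where
  natDegree_eq : p.natDegree = ν
  coeff_eq : p.coeff ν = M
  C_dvd : C M ∣ p
  natDegree_coeff_le : ∀ v, (p.coeff v).natDegree ≤ b

theorem stairShape_C {M : R[X]} {b : ℕ} (hb : M.natDegree ≤ b) : StairShape (C M) M 0 b where
  natDegree_eq := natDegree_C M
  coeff_eq := coeff_C_zero
  C_dvd := dvd_rfl
  natDegree_coeff_le v := by
    rw [coeff_C]
    split_ifs
    exacts [hb, by simp]

theorem StairShape.of_C_mul_eq [IsDomain R] {f M : R[X]} (hf : f.Monic) (hd : 0 < f.natDegree)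
    (hM : M ≠ 0) {h g S : R[X][X]} {e ν b : ℕ} (hb : 0 < b) (hg : StairShape g (M * f) ν b)
    (hSdeg : S.degree < ↑(e + ν)) (hSdvd : C (M * f) ∣ S)
    (hScoeff : ∀ v, (S.coeff v).natDegree ≤ f.natDegree - 1 + b)
    (heq : C f * h = X ^ e * g + S) :
    StairShape h M (e + ν) b ∧ ∀ v, (h.coeff v).natDegree < b := by
  have hf0 : f ≠ 0 := hf.ne_zero
  have hg0 : g ≠ 0 := fun h0 ↦ mul_ne_zero hM hf0 (by rw [← hg.coeff_eq, h0, coeff_zero])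
  obtain ⟨hdeg, hlc⟩ :=
    natDegree_eq_and_leadingCoeff_of_C_mul_eq hf0 hg0 (hg.natDegree_eq ▸ hSdeg) heq
  rw [hg.natDegree_eq] at hdeg
  have hlt := natDegree_coeff_lt_of_C_mul_eq hf hd hb hg.natDegree_coeff_le hScoeff heq
  refine ⟨⟨hdeg, ?_, ?_, fun v ↦ (hlt v).le⟩, hlt⟩
  · refine mul_left_cancel₀ hf0 ?_
    rw [← hdeg, ← leadingCoeff, hlc, leadingCoeff, hg.natDegree_eq, hg.coeff_eq, mul_comm]
  · have : C f * C M ∣ C f * h := by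
      rw [heq, ← C_mul, mul_comm f]
      exact dvd_add (dvd_mul_of_dvd_right hg.C_dvd _) hSdvd
    exact (mul_dvd_mul_iff_left (C_ne_zero.mpr hf0)).mp this

end StairShape

section Staircase

variable {R : Type*} [CommRing R] (m : ℕ → ℕ) (sd : ℕ → R[X])

noncomputable def diagFactor (i : ℕ) : R[X] := X ^ (m (i + 1) - m i) - sd i

noncomputable def diagProd (i : ℕ) : R[X] := ∏ j ∈ range i, diagFactor m sd j

variable {m sd}

theorem monic_diagFactor {i : ℕ} (h : (sd i).degree < ↑(m (i + 1) - m i)) :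
    (diagFactor m sd i).Monic :=
  monic_X_pow_sub h

theorem natDegree_diagFactor [Nontrivial R] {i : ℕ} (h : (sd i).degree < ↑(m (i + 1) - m i)) :
    (diagFactor m sd i).natDegree = m (i + 1) - m i := by
  refine natDegree_eq_of_degree_eq_some ?_
  rw [diagFactor, degree_sub_eq_left_of_degree_lt (by rwa [degree_X_pow]), degree_X_pow]

theorem diagProd_succ (i : ℕ) : diagProd m sd (i + 1) = diagProd m sd i * diagFactor m sd i :=
  prod_range_succ _ _

theorem diagProd_dvd_diagProd {i j : ℕ} (hij : i ≤ j) : diagProd m sd i ∣ diagProd m sd j :=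
  prod_dvd_prod_of_subset _ _ _ (range_subset_range.mpr hij)

theorem monic_diagProd {i : ℕ} (h : ∀ j < i, (sd j).degree < ↑(m (j + 1) - m j)) :
    (diagProd m sd i).Monic :=
  monic_prod_of_monic _ _ fun j hj ↦ monic_diagFactor (h j (mem_range.mp hj))

theorem natDegree_diagProd_add [Nontrivial R] {i : ℕ} (hm : ∀ j < i, m j < m (j + 1))
    (h : ∀ j < i, (sd j).degree < ↑(m (j + 1) - m j)) :
    (diagProd m sd i).natDegree + m 0 = m i := by
  induction i with
  | zero => simp [diagProd]
  | succ i ih =>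
    have hi := hm i i.lt_succ_self
    rw [diagProd_succ, (monic_diagProd fun j hj ↦ h j (by omega)).natDegree_mul
      (monic_diagFactor (h i i.lt_succ_self)), natDegree_diagFactor (h i i.lt_succ_self)]
    have := ih (fun j hj ↦ hm j (by omega)) (fun j hj ↦ h j (by omega))
    omega

end Staircase

section Recursion

variable {R : Type*} [CommRing R] {s i : ℕ} {m n : ℕ → ℕ} {sig : ℕ → ℕ → R[X][X]}
  {sd : ℕ → R[X]} {H : ℕ → R[X][X]}

theorem C_diagFactor_mul_eq (hi : i < s) (hdiag : sig i i = C (sd i))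
    (hrec : C (X ^ (m (i + 1) - m i)) * H i - X ^ (n i - n (i + 1)) * H (i + 1)
      = ∑ j ∈ Icc i s, sig j i * H j) :
    C (diagFactor m sd i) * H i
      = X ^ (n i - n (i + 1)) * H (i + 1) + ∑ j ∈ Ioc i s, sig j i * H j := by
  rw [← Ioc_insert_left hi.le, sum_insert left_notMem_Ioc, hdiag] at hrec
  rw [diagFactor, map_sub]
  linear_combination hrec

theorem degree_sum_Ioc_lt (hn : AntitoneOn n (Set.Iic s))
    (hdegy : ∀ j ∈ Ioc i s, (sig j i).degree < ↑(n (j - 1) - n j))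
    (hH : ∀ j ∈ Ioc i s, (H j).natDegree = n j) :
    (∑ j ∈ Ioc i s, sig j i * H j).degree < n i := by
  refine (degree_sum_le _ _).trans_lt
    ((Finset.sup_lt_iff (WithBot.bot_lt_coe _)).mpr fun j hj ↦ ?_)
  obtain ⟨hij, hjs⟩ := mem_Ioc.mp hj
  have hmem : ∀ k ≤ s, k ∈ Set.Iic s := fun _ ↦ Set.mem_Iic.mpr
  have hnj : n j ≤ n (j - 1) := hn (hmem _ (by omega)) (hmem _ hjs) (by omega)
  have hni : n (j - 1) ≤ n i := hn (hmem _ (by omega)) (hmem _ (by omega)) (by omega)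
  refine (degree_mul_lt_of_degree_lt (hdegy j hj) _).trans_le ?_
  rw [hH j hj]
  exact_mod_cast (by omega : n (j - 1) - n j + n j ≤ n i)

theorem stairShape_of_lt [IsDomain R] (hi : i < s) (hmi : m i < m (i + 1)) (hms : 0 < m s)
    (hn : AntitoneOn n (Set.Iic s)) (hni : n (i + 1) < n i)
    (hsd : ∀ j ≤ i, (sd j).degree < ↑(m (j + 1) - m j))
    (hdegx : ∀ j ∈ Ioc i s, ∀ v, ((sig j i).coeff v).degree < ↑(m (i + 1) - m i))
    (hdegy : ∀ j ∈ Ioc i s, (sig j i).degree < ↑(n (j - 1) - n j))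
    (hkey : C (diagFactor m sd i) * H i
      = X ^ (n i - n (i + 1)) * H (i + 1) + ∑ j ∈ Ioc i s, sig j i * H j)
    (ih : ∀ j ∈ Ioc i s, StairShape (H j) (diagProd m sd j) (n j) (m s)) :
    StairShape (H i) (diagProd m sd i) (n i) (m s) ∧ ∀ v, ((H i).coeff v).natDegree < m s := by
  have hfd := natDegree_diagFactor (hsd i le_rfl)
  have hsucc : i + 1 ∈ Ioc i s := mem_Ioc.mpr ⟨i.lt_succ_self, hi⟩
  have hg := ih (i + 1) hsucc
  rw [diagProd_succ] at hg
  have hν : n i - n (i + 1) + n (i + 1) = n i := by omega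
  rw [← hν]
  refine StairShape.of_C_mul_eq (monic_diagFactor (hsd i le_rfl)) (by omega)
    (monic_diagProd fun j hj ↦ hsd j hj.le).ne_zero hms hg ?_ ?_ ?_ hkey
  · rw [hν]
    exact degree_sum_Ioc_lt hn hdegy fun j hj ↦ (ih j hj).natDegree_eq
  · rw [← diagProd_succ]
    exact dvd_sum fun j hj ↦ dvd_mul_of_dvd_right
      ((_root_.map_dvd C (diagProd_dvd_diagProd (mem_Ioc.mp hj).1)).trans (ih j hj).C_dvd) _
  · intro v
    rw [finsetSum_coeff, hfd]
    exact natDegree_sum_le_of_forall_le _ _ fun j hj ↦ natDegree_coeff_mul_le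
      (fun v ↦ natDegree_le_sub_one_of_degree_lt (hdegx j hj v)) (ih j hj).natDegree_coeff_le v

end Recursion

theorem stmt17_general {K : Type*} [Field K] (s : ℕ) (m n : ℕ → ℕ)
    (hns : n s = 0)
    (hm : ∀ i < s, m i < m (i + 1)) (hn : ∀ i < s, n (i + 1) < n i)
    (sig : ℕ → ℕ → Polynomial (Polynomial K)) (sd : ℕ → Polynomial K)
    (hdiag : ∀ i < s, sig i i = Polynomial.C (sd i) ∧
      (sd i).degree < ((m (i + 1) - m i : ℕ) : WithBot ℕ))
    (hdegx : ∀ i < s, ∀ j, i ≤ j → j ≤ s → ∀ v : ℕ,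
      ((sig j i).coeff v).degree < ((m (i + 1) - m i : ℕ) : WithBot ℕ))
    (hdegy : ∀ i < s, ∀ j, i < j → j ≤ s →
      (sig j i).degree < ((n (j - 1) - n j : ℕ) : WithBot ℕ))
    (H : ℕ → Polynomial (Polynomial K))
    (hHs : H s = Polynomial.C
      (∏ i ∈ Finset.range s, (Polynomial.X ^ (m (i + 1) - m i) - sd i)))
    (hrec : ∀ i < s,
      Polynomial.C (Polynomial.X ^ (m (i + 1) - m i)) * H i -
          Polynomial.X ^ (n i - n (i + 1)) * H (i + 1)
        = ∑ j ∈ Finset.Icc i s, sig j i * H j) :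
    ∀ i ≤ s,
      (H i).natDegree = n i ∧
      (H i).coeff (n i) =
        ∏ j ∈ Finset.range i, (Polynomial.X ^ (m (j + 1) - m j) - sd j) ∧
      Polynomial.C (∏ j ∈ Finset.range i, (Polynomial.X ^ (m (j + 1) - m j) - sd j)) ∣
        H i ∧
      (∀ v : ℕ, ((H i).coeff v).natDegree ≤ m s) ∧
      (i < s → ∀ v : ℕ, ((H i).coeff v).natDegree < m s) := by
  have hm_mono : StrictMonoOn m (Set.Iic s) := strictMonoOn_Iic_of_lt_succ hm
  have hn_anti : AntitoneOn n (Set.Iic s) := (strictAntiOn_Iic_of_succ_lt hn).antitoneOn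
  have hsd : ∀ j < s, (sd j).degree < ↑(m (j + 1) - m j) := fun j hj ↦ (hdiag j hj).2
  have shape_s : StairShape (H s) (diagProd m sd s) (n s) (m s) := by
    rw [hHs, hns]
    exact stairShape_C (M := diagProd m sd s) (by have := natDegree_diagProd_add hm hsd; omega)
  have step : ∀ i < s, (∀ j ∈ Ioc i s, StairShape (H j) (diagProd m sd j) (n j) (m s)) →
      StairShape (H i) (diagProd m sd i) (n i) (m s) ∧ ∀ v, ((H i).coeff v).natDegree < m s :=
    fun i hi ih ↦ stairShape_of_lt hi (hm i hi)
      ((Nat.zero_le _).trans_lt (hm_mono (Set.mem_Iic.mpr hi.le) (Set.mem_Iic.mpr le_rfl) hi))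
      hn_anti (hn i hi) (fun j hj ↦ hsd j (by omega))
      (fun j hj ↦ hdegx i hi j (mem_Ioc.mp hj).1.le (mem_Ioc.mp hj).2)
      (fun j hj ↦ hdegy i hi j (mem_Ioc.mp hj).1 (mem_Ioc.mp hj).2)
      (C_diagFactor_mul_eq hi (hdiag i hi).1 (hrec i hi)) ih
  have shape : ∀ i ≤ s, StairShape (H i) (diagProd m sd i) (n i) (m s) :=
    Nat.decreasing_induction_Ioc shape_s fun i hi ih ↦ (step i hi ih).1
  intro i hi
  obtain ⟨hdeg, hcoeff, hdvd, hle⟩ := shape i hi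
  exact ⟨hdeg, hcoeff, hdvd, hle,
    fun hi ↦ (step i hi fun j hj ↦ shape j (mem_Ioc.mp hj).2).2⟩

/-- Conca–Valla construction (in `K[x][y]`, `y` outer, lex order `y ≻ x`): given syzygy
data `sig j i` with the prescribed degree constraints (`deg_x sig j i < d (i+1)`,
`sig i i = C (sd i) ∈ K[x]`, `deg_y sig j i < e j` for `j > i`), define
`H s = ∏_{i<s} (x^(d (i+1)) − sd i)` and, descending,
`x^(d (i+1)) H i − y^(e (i+1)) H (i+1) = ∑_{j=i}^{s} sig j i * H j`.
Then each `H i` has initial term `x^(m i) y^(n i)` (its `y`-degree is `n i` and the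
coefficient of `y^(n i)` is `M i = ∏_{j<i} (x^(d (j+1)) − sd j)`, which divides `H i`),
and `deg_x H i ≤ m s` with strict inequality for `i < s`. -/
theorem stmt17 {K : Type*} [Field K] (s : ℕ) (hs : 0 < s) (m n : ℕ → ℕ)
    (hm0 : m 0 = 0) (hns : n s = 0)
    (hm : ∀ i < s, m i < m (i + 1)) (hn : ∀ i < s, n (i + 1) < n i)
    (sig : ℕ → ℕ → Polynomial (Polynomial K)) (sd : ℕ → Polynomial K)
    (hdiag : ∀ i < s, sig i i = Polynomial.C (sd i) ∧
      (sd i).degree < ((m (i + 1) - m i : ℕ) : WithBot ℕ))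
    (hdegx : ∀ i < s, ∀ j, i ≤ j → j ≤ s → ∀ v : ℕ,
      ((sig j i).coeff v).degree < ((m (i + 1) - m i : ℕ) : WithBot ℕ))
    (hdegy : ∀ i < s, ∀ j, i < j → j ≤ s →
      (sig j i).degree < ((n (j - 1) - n j : ℕ) : WithBot ℕ))
    (H : ℕ → Polynomial (Polynomial K))
    (hHs : H s = Polynomial.C
      (∏ i ∈ Finset.range s, (Polynomial.X ^ (m (i + 1) - m i) - sd i)))
    (hrec : ∀ i < s,
      Polynomial.C (Polynomial.X ^ (m (i + 1) - m i)) * H i -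
          Polynomial.X ^ (n i - n (i + 1)) * H (i + 1)
        = ∑ j ∈ Finset.Icc i s, sig j i * H j) :
    ∀ i ≤ s,
      (H i).natDegree = n i ∧
      (H i).coeff (n i) =
        ∏ j ∈ Finset.range i, (Polynomial.X ^ (m (j + 1) - m j) - sd j) ∧
      Polynomial.C (∏ j ∈ Finset.range i, (Polynomial.X ^ (m (j + 1) - m j) - sd j)) ∣
        H i ∧
      (∀ v : ℕ, ((H i).coeff v).natDegree ≤ m s) ∧
      (i < s → ∀ v : ℕ, ((H i).coeff v).natDegree < m s) :=
  stmt17_general s m n hns hm hn sig sd hdiag hdegx hdegy H hHs hrec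
end

section
/- Let F: A^N → A^M be given by polynomials with coefficients in a local ring (A, m), let λ ∈ A^N be a zero of F, and suppose the Jacobian matrix of F at λ has an N×N minor that is a unit in A. If α ∈ A^N satisfies α ≡ λ mod m^κ, then the linearized system F(α) + JF(α)·ε = 0 has a unique solution ε ∈ (m^κ)^N modulo m^{2κ}, and α + ε ≡ λ mod m^{2κ}. -/
/-!
Take `ε := λ - α`. Since `λ - α ∈ 𝔪^κ`, first-order Taylor expansion of `F` at `α` is exact
modulo `(𝔪^κ)^2 = 𝔪^(2κ)`, so `F(α) + JF(α)(λ - α) ≡ F(λ) = 0`. If `ε'` is another solution in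
`(𝔪^κ)^N`, then `JF(α)(ε - ε') ≡ 0`, and since `JF(α) ≡ JF(λ) mod 𝔪^κ` while `ε - ε' ∈ 𝔪^κ`,
also `JF(λ)(ε - ε') ≡ 0 mod 𝔪^(2κ)`. Inverting the unit minor of `JF(λ)` gives `ε ≡ ε'`.
-/

open MvPolynomial

namespace MvPolynomial

variable {R σ : Type*} [CommRing R] [Fintype σ]

theorem eval_add_sub_eval_sub_sum_pderiv_mem_sq (I : Ideal R) (x : σ → R) {h : σ → R}
    (hh : ∀ j, h j ∈ I) (P : MvPolynomial σ R) :
    eval (x + h) P - eval x P - ∑ j, eval x (pderiv j P) * h j ∈ I ^ 2 := by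
  classical
  induction P using MvPolynomial.induction_on with
  | C a => simp
  | add p q hp hq =>
      convert Ideal.add_mem _ hp hq using 1
      simp only [map_add, Finset.sum_add_distrib, add_mul]
      ring
  | mul_X p k hp =>
      have hlin : ∑ j, eval x (pderiv j p) * h j ∈ I :=
        Ideal.sum_mem _ fun j _ => Ideal.mul_mem_left _ _ (hh j)
      have hdiff : eval (x + h) p - eval x p ∈ I := by
        convert Ideal.add_mem _ (Ideal.pow_le_self two_ne_zero hp) hlin using 1
        ring
      have hsum : ∑ j, eval x (pderiv j (p * X k)) * h j
          = (∑ j, eval x (pderiv j p) * h j) * x k + eval x p * h k := by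
        simp only [pderiv_mul, pderiv_X, map_add, map_mul, eval_X, add_mul,
          Finset.sum_add_distrib, Finset.sum_mul]
        congr 1
        · exact Finset.sum_congr rfl fun _ _ => by ring
        · simp [Pi.single_apply]
      have hsplit : eval (x + h) (p * X k) - eval x (p * X k)
            - ∑ j, eval x (pderiv j (p * X k)) * h j
          = (eval (x + h) p - eval x p - ∑ j, eval x (pderiv j p) * h j) * x k
            + (eval (x + h) p - eval x p) * h k := by
        rw [hsum]; simp only [map_mul, eval_X, Pi.add_apply]; ring
      rw [hsplit]
      exact Ideal.add_mem _ (Ideal.mul_mem_right _ _ hp)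
        (pow_two I ▸ Ideal.mul_mem_mul hdiff (hh k))

omit [Fintype σ] in
theorem eval_sub_eval_mem {I : Ideal R} {a b : σ → R} (hab : ∀ j, a j - b j ∈ I)
    (P : MvPolynomial σ R) : eval a P - eval b P ∈ I := by
  rw [← Ideal.Quotient.eq]
  change Ideal.Quotient.mk I (eval₂ (RingHom.id R) a P) = Ideal.Quotient.mk I (eval₂ _ b P)
  rw [eval₂_comp_left, eval₂_comp_left]
  exact congrArg (eval₂ _ · P) (_root_.funext fun j => Ideal.Quotient.eq.mpr (hab j))

theorem eval_add_sum_pderiv_mul_sub_mem_sq {I : Ideal R} {a b : σ → R}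
    (hab : ∀ j, b j - a j ∈ I) {P : MvPolynomial σ R} (hP : eval b P = 0) :
    eval a P + ∑ j, eval a (pderiv j P) * (b j - a j) ∈ I ^ 2 := by
  have h := eval_add_sub_eval_sub_sum_pderiv_mem_sq I a (h := b - a) hab P
  rw [add_sub_cancel, hP] at h
  simp only [Pi.sub_apply] at h
  convert neg_mem h using 1
  ring

theorem sum_eval_pderiv_mul_mem_sq_of_sub_mem {I : Ideal R} {a b v : σ → R}
    (hab : ∀ j, a j - b j ∈ I) (hv : ∀ j, v j ∈ I) (P : MvPolynomial σ R)
    (ha : ∑ j, eval a (pderiv j P) * v j ∈ I ^ 2) :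
    ∑ j, eval b (pderiv j P) * v j ∈ I ^ 2 := by
  have hdiff : ∑ j, (eval b (pderiv j P) - eval a (pderiv j P)) * v j ∈ I ^ 2 := by
    rw [pow_two]
    refine Ideal.sum_mem _ fun j _ => Ideal.mul_mem_mul ?_ (hv j)
    exact eval_sub_eval_mem (fun j => by simpa using neg_mem (hab j)) _
  convert Ideal.add_mem _ hdiff ha using 1
  rw [← Finset.sum_add_distrib]
  exact Finset.sum_congr rfl fun j _ => by ring

end MvPolynomial

namespace Matrix

theorem mem_of_isUnit_det_of_mulVec_mem {R n : Type*} [CommRing R] [Fintype n]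
    [DecidableEq n] {A : Matrix n n R} (hA : IsUnit A.det) {J : Ideal R} {v : n → R}
    (hAv : ∀ i, (A *ᵥ v) i ∈ J) (j : n) : v j ∈ J := by
  rw [← one_mulVec v, ← nonsing_inv_mul A hA, ← mulVec_mulVec]
  exact Ideal.sum_mem _ fun i _ => Ideal.mul_mem_left _ _ (hAv i)

end Matrix

/-- Newton iteration step over a local ring `(A, 𝔪)`: if `λ` is a zero of a polynomial
map `F : A^N → A^M` whose Jacobian at `λ` has an `N×N` minor that is a unit, and
`α ≡ λ mod 𝔪^κ`, then the linearized system `F(α) + JF(α)·ε = 0` has a solution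
`ε ∈ (𝔪^κ)^N`, unique modulo `𝔪^(2κ)`, and `α + ε ≡ λ mod 𝔪^(2κ)`. -/
theorem stmt18 {A : Type*} [CommRing A] [IsLocalRing A] (N M : ℕ)
    (F : Fin M → MvPolynomial (Fin N) A) (lam α : Fin N → A) (κ : ℕ)
    (hzero : ∀ i, MvPolynomial.eval lam (F i) = 0)
    (hminor : ∃ r : Fin N ↪ Fin M,
      IsUnit (Matrix.det (Matrix.of fun i j : Fin N =>
        MvPolynomial.eval lam (MvPolynomial.pderiv j (F (r i))))))
    (hα : ∀ j, α j - lam j ∈ (IsLocalRing.maximalIdeal A) ^ κ) :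
    ∃ ε : Fin N → A,
      (∀ j, ε j ∈ (IsLocalRing.maximalIdeal A) ^ κ) ∧
      (∀ i, MvPolynomial.eval α (F i) +
          ∑ j, MvPolynomial.eval α (MvPolynomial.pderiv j (F i)) * ε j ∈
            (IsLocalRing.maximalIdeal A) ^ (2 * κ)) ∧
      (∀ j, α j + ε j - lam j ∈ (IsLocalRing.maximalIdeal A) ^ (2 * κ)) ∧
      ∀ ε' : Fin N → A, (∀ j, ε' j ∈ (IsLocalRing.maximalIdeal A) ^ κ) →
        (∀ i, MvPolynomial.eval α (F i) +
            ∑ j, MvPolynomial.eval α (MvPolynomial.pderiv j (F i)) * ε' j ∈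
              (IsLocalRing.maximalIdeal A) ^ (2 * κ)) →
        ∀ j, ε j - ε' j ∈ (IsLocalRing.maximalIdeal A) ^ (2 * κ) := by
  rw [pow_mul']
  have hε : ∀ j, lam j - α j ∈ IsLocalRing.maximalIdeal A ^ κ := fun j => by
    simpa using neg_mem (hα j)
  have hsol i := eval_add_sum_pderiv_mul_sub_mem_sq hε (hzero i)
  refine ⟨lam - α, hε, hsol, fun j => by simp, fun ε' hε' hsol' j => ?_⟩
  change (lam - α - ε') j ∈ _
  obtain ⟨r, hdet⟩ := hminor
  have hv j : (lam - α - ε') j ∈ IsLocalRing.maximalIdeal A ^ κ := sub_mem (hε j) (hε' j)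
  have hαv i : ∑ j, eval α (pderiv j (F i)) * (lam - α - ε') j
      ∈ (IsLocalRing.maximalIdeal A ^ κ) ^ 2 := by
    convert sub_mem (hsol i) (hsol' i) using 1
    rw [add_sub_add_left_eq_sub, ← Finset.sum_sub_distrib]
    exact Finset.sum_congr rfl fun j _ => by simp only [Pi.sub_apply]; ring
  refine Matrix.mem_of_isUnit_det_of_mulVec_mem hdet (fun i => ?_) j
  exact sum_eval_pderiv_mul_mem_sq_of_sub_mem hα hv _ (hαv (r i))
end
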